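/- arXiv:2003.08319 — 7 statements merged into one kernel-verified Lean document; each statement's English description precedes it below -/
import Mathlib

section
/- Let (ξ_n)_{n≥1} be a sequence of real numbers and let z_n = √n · e^{2πi ξ_n} ∈ ℂ. If the sequence (z_n) has asymptotic density π⁻¹, then (ξ_n) is uniformly distributed mod 1. -/
open Filter Topology MeasureTheory

/-- The point `z_n = √n · e^{2πi ξ_n}` in the complex plane. -/
noncomputable def zseq (ξ : ℕ → ℝ) (n : ℕ) : ℂ :=
  (Real.sqrt n : ℂ) * Complex.exp (2 * Real.pi * Complex.I * (ξ n : ℂ))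

/-- A sequence of reals is uniformly distributed mod 1: for all `a < b` with
`b - a ≤ 1`, the proportion of `n ≤ N` with `ξ n ∈ [a, b) + ℤ` tends to `b - a`. -/
def UnifDistMod1 (ξ : ℕ → ℝ) : Prop :=
  ∀ a b : ℝ, a < b → b - a ≤ 1 →
    Tendsto
      (fun N : ℕ =>
        ({n : ℕ | 1 ≤ n ∧ n ≤ N ∧ ∃ k : ℤ, a ≤ ξ n - k ∧ ξ n - k < b}.ncard : ℝ) / N)
      atTop (𝓝 (b - a))

/-- A sequence of complex numbers has asymptotic density `ρ`: for every bounded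
`B ⊆ ℂ` whose topological boundary is Lebesgue-null,
`#{n : z n ∈ R·B} / R² → ρ · vol B` as `R → ∞`. -/
def HasAsympDensity (z : ℕ → ℂ) (ρ : ℝ) : Prop :=
  ∀ B : Set ℂ, Bornology.IsBounded B → volume (frontier B) = 0 →
    Tendsto
      (fun R : ℝ =>
        ({n : ℕ | 1 ≤ n ∧ z n ∈ (fun w : ℂ => (R : ℂ) * w) '' B}.ncard : ℝ) / R ^ 2)
      atTop (𝓝 (ρ * (volume B).toReal))

section Aux

lemma hmul_le' {x y : ℝ} : 2*Real.pi*x ≤ 2*Real.pi*y ↔ x ≤ y :=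
  mul_le_mul_iff_right₀ (by positivity)

lemma hmul_lt' {x y : ℝ} : 2*Real.pi*x < 2*Real.pi*y ↔ x < y :=
  mul_lt_mul_iff_right₀ (by positivity)

lemma arg_polar' {p : ℝ × ℝ} (h1 : 0 < p.1) (h2 : p.2 ∈ Set.Ioc (-Real.pi) Real.pi) :
    Complex.arg (Complex.polarCoord.symm p) = p.2 := by
  rw [Complex.polarCoord_symm_apply, Complex.ofReal_cos, Complex.ofReal_sin]
  exact Complex.arg_mul_cos_add_sin_mul_I h1 h2

lemma arg_r_exp' {r φ : ℝ} (hr : 0 < r) (hφ : φ ∈ Set.Ioc (-Real.pi) Real.pi) :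
    Complex.arg ((r:ℂ) * Complex.exp ((φ:ℝ) * Complex.I)) = φ := by
  rw [Complex.exp_mul_I]
  exact Complex.arg_mul_cos_add_sin_mul_I hr hφ

lemma arg_aux' {r θ c : ℝ} (hr : 0 < r) (hc : 0 < c) (hc1 : c < 1) :
    Complex.arg ((r : ℂ) * Complex.exp ((2 * Real.pi * θ : ℝ) * Complex.I)) ∈
      Set.Ico (-(Real.pi * c)) (Real.pi * c) ↔
    ∃ k : ℤ, -(c/2) ≤ θ - k ∧ θ - k < c/2 := by
  have hπ := Real.pi_pos
  set z : ℂ := (r : ℂ) * Complex.exp ((2 * Real.pi * θ : ℝ) * Complex.I) with hzdef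
  have habs : ‖z‖ = r := by
    rw [hzdef, norm_mul, Complex.norm_real, Complex.norm_exp_ofReal_mul_I,
      Real.norm_of_nonneg hr.le, mul_one]
  constructor
  · rintro ⟨hlo, hhi⟩
    have hz : (↑‖z‖ : ℂ) * Complex.exp (↑(Complex.arg z) * Complex.I) = z :=
      Complex.norm_mul_exp_arg_mul_I z
    rw [habs] at hz
    have hexp : Complex.exp (↑(Complex.arg z) * Complex.I)
        = Complex.exp ((2 * Real.pi * θ : ℝ) * Complex.I) := by
      have hr0 : (r : ℂ) ≠ 0 := Complex.ofReal_ne_zero.2 hr.ne'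
      apply mul_left_cancel₀ hr0
      rw [hz, hzdef]
    obtain ⟨m, hm⟩ := Complex.exp_eq_exp_iff_exists_int.1 hexp
    have hmI : (↑(Complex.arg z) : ℂ) * Complex.I
        = (↑(2 * Real.pi * θ + m * (2 * Real.pi)) : ℝ) * Complex.I := by
      rw [hm]; push_cast; ring
    have hre : Complex.arg z = 2 * Real.pi * θ + m * (2 * Real.pi) :=
      Complex.ofReal_inj.1 (mul_right_cancel₀ Complex.I_ne_zero hmI)
    have key : 2 * Real.pi * (θ - (-m : ℤ)) = Complex.arg z := by push_cast; rw [hre]; ring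
    refine ⟨-m, ?_, ?_⟩
    · rw [← hmul_le', key]
      calc 2 * Real.pi * (-(c/2)) = -(Real.pi * c) := by ring
        _ ≤ Complex.arg z := hlo
    · rw [← hmul_lt', key]
      calc Complex.arg z < Real.pi * c := hhi
        _ = 2 * Real.pi * (c/2) := by ring
  · rintro ⟨k, h1, h2⟩
    have hφlo : -(Real.pi * c) ≤ 2 * Real.pi * (θ - k) := by
      calc -(Real.pi * c) = 2 * Real.pi * (-(c/2)) := by ring
        _ ≤ 2 * Real.pi * (θ - k) := hmul_le'.2 h1
    have hφhi : 2 * Real.pi * (θ - k) < Real.pi * c := by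
      calc 2 * Real.pi * (θ - k) < 2 * Real.pi * (c/2) := hmul_lt'.2 h2
        _ = Real.pi * c := by ring
    have hπc : Real.pi * c < Real.pi := by nlinarith
    have hzφ : z = (r : ℂ) * Complex.exp ((2 * Real.pi * (θ - k) : ℝ) * Complex.I) := by
      rw [hzdef]
      congr 1
      rw [show ((2 * Real.pi * θ : ℝ) : ℂ) * Complex.I
          = ((2 * Real.pi * (θ - k) : ℝ) : ℂ) * Complex.I + (k : ℤ) * (2 * Real.pi * Complex.I)
          by push_cast; ring,
        Complex.exp_add, Complex.exp_int_mul_two_pi_mul_I, mul_one]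
    have harg : Complex.arg z = 2 * Real.pi * (θ - k) := by
      rw [hzφ]
      exact arg_r_exp' hr ⟨by linarith, by linarith⟩
    exact ⟨by rw [harg]; exact hφlo, by rw [harg]; exact hφhi⟩

lemma vol_polar' (S : Set ℂ) (hS : MeasurableSet S)
    (J Φ : Set ℝ) (hJ : MeasurableSet J) (hJs : J ⊆ Set.Ioi 0) (hΦ : MeasurableSet Φ)
    (hΦs : Φ ⊆ Set.Ioo (-Real.pi) Real.pi)
    (hchar : ∀ p : ℝ × ℝ, p ∈ polarCoord.target →
      (Complex.polarCoord.symm p ∈ S ↔ p ∈ J ×ˢ Φ)) :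
    (volume S).toReal = (∫ r in J, r) * (volume Φ).toReal := by
  have h1 : (volume S).toReal = ∫ z : ℂ, S.indicator 1 z := (integral_indicator_one hS).symm
  rw [h1, ← Complex.integral_comp_polarCoord_symm]
  have h2 : ∀ p ∈ polarCoord.target,
      p.1 • S.indicator (1 : ℂ → ℝ) (Complex.polarCoord.symm p)
      = (J ×ˢ Φ).indicator (fun q : ℝ × ℝ => q.1) p := by
    intro p hp
    by_cases h : Complex.polarCoord.symm p ∈ S
    · rw [Set.indicator_of_mem h, Set.indicator_of_mem ((hchar p hp).1 h)]; simp
    · rw [Set.indicator_of_notMem h,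
        Set.indicator_of_notMem (fun hm => h ((hchar p hp).2 hm))]; simp
  rw [setIntegral_congr_fun polarCoord.open_target.measurableSet h2,
    setIntegral_indicator (hJ.prod hΦ),
    Set.inter_eq_self_of_subset_right (by rw [polarCoord_target]; exact Set.prod_mono hJs hΦs)]
  rw [Measure.volume_eq_prod, ← Measure.prod_restrict]
  have h3 : ∫ p : ℝ × ℝ, p.1 ∂((volume.restrict J).prod (volume.restrict Φ))
      = (∫ x in J, x) * ∫ y in Φ, (1:ℝ) := by
    rw [← integral_prod_mul (f := fun x : ℝ => x) (g := fun _ : ℝ => (1:ℝ))]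
    simp
  rw [h3]
  congr 1
  simp [integral_const, Measure.real]

/-- The sector of the punctured unit disc with angles in `[-πc, πc)`. -/
def sectorC (c : ℝ) : Set ℂ :=
  {z : ℂ | ‖z‖ ∈ Set.Ioc 0 1 ∧ Complex.arg z ∈ Set.Ico (-(Real.pi*c)) (Real.pi*c)}

lemma integral_id_Ioc' : (∫ r in Set.Ioc (0:ℝ) 1, r) = 1/2 := by
  rw [← intervalIntegral.integral_of_le zero_le_one, integral_id]
  norm_num

lemma integral_id_Ioo' : (∫ r in Set.Ioo (0:ℝ) 1, r) = 1/2 := by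
  rw [← integral_Ioc_eq_integral_Ioo, integral_id_Ioc']

lemma sector_facts' {c : ℝ} (hc : 0 < c) (hc1 : c < 1) :
    volume (sectorC c) = ENNReal.ofReal (Real.pi * c) ∧
      volume (frontier (sectorC c)) = 0 := by
  have hπ := Real.pi_pos
  have hπc0 : 0 < Real.pi * c := by positivity
  have hπc : Real.pi * c < Real.pi := by nlinarith
  set KK : Set ℂ :=
    Complex.polarCoord.symm '' (Set.Icc 0 1 ×ˢ Set.Icc (-(Real.pi*c)) (Real.pi*c)) with hKdef
  set U : Set ℂ :=
    Complex.polarCoord.symm '' (Set.Ioo 0 1 ×ˢ Set.Ioo (-(Real.pi*c)) (Real.pi*c)) with hUdef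
  have hcont : Continuous (Complex.polarCoord.symm : ℝ × ℝ → ℂ) := by
    have : (Complex.polarCoord.symm : ℝ × ℝ → ℂ)
        = fun p => (p.1 : ℂ) * (↑(Real.cos p.2) + ↑(Real.sin p.2) * Complex.I) :=
      funext fun p => Complex.polarCoord_symm_apply p
    rw [this]; fun_prop
  have hKcomp : IsCompact KK :=
    ((isCompact_Icc.prod isCompact_Icc).image hcont)
  have hUopen : IsOpen U := by
    apply Complex.polarCoord.symm.isOpen_image_of_subset_source
      (isOpen_Ioo.prod isOpen_Ioo)
    rw [OpenPartialHomeomorph.symm_source, Complex.polarCoord_target]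
    exact Set.prod_mono (Set.Ioo_subset_Ioi_self) (Set.Ioo_subset_Ioo (by linarith) hπc.le)
  have hCK : sectorC c ⊆ KK := by
    rintro z ⟨hz1, hz2⟩
    refine ⟨(‖z‖, Complex.arg z), ⟨⟨(norm_nonneg z), hz1.2⟩,
      ⟨hz2.1, hz2.2.le⟩⟩, ?_⟩
    rw [Complex.polarCoord_symm_apply]
    push_cast
    exact Complex.norm_mul_cos_add_sin_mul_I z
  have hUC : U ⊆ sectorC c := by
    rintro z ⟨q, ⟨hq1, hq2⟩, rfl⟩
    have hq1' : 0 < q.1 := hq1.1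
    have harg : Complex.arg (Complex.polarCoord.symm q) = q.2 :=
      arg_polar' hq1' ⟨by linarith [hq2.1], by linarith [hq2.2]⟩
    have habs : ‖Complex.polarCoord.symm q‖ = q.1 := by
      rw [Complex.norm_polarCoord_symm, abs_of_pos hq1']
    exact ⟨by rw [habs]; exact ⟨hq1', hq1.2.le⟩, by rw [harg]; exact ⟨hq2.1.le, hq2.2⟩⟩
  have charK : ∀ p : ℝ × ℝ, p ∈ polarCoord.target →
      (Complex.polarCoord.symm p ∈ KK ↔
        p ∈ Set.Ioc (0:ℝ) 1 ×ˢ Set.Icc (-(Real.pi*c)) (Real.pi*c)) := by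
    rintro p hp
    rw [polarCoord_target] at hp
    obtain ⟨hp1, hp2⟩ := hp
    constructor
    · rintro ⟨q, ⟨hq1, hq2⟩, hqe⟩
      have habs : |q.1| = |p.1| := by
        rw [← Complex.norm_polarCoord_symm, ← Complex.norm_polarCoord_symm, hqe]
      have hq1e : q.1 = p.1 := by
        rw [abs_of_nonneg hq1.1, abs_of_pos hp1] at habs; exact habs
      have hq1' : 0 < q.1 := hq1e ▸ hp1
      have harg : q.2 = p.2 := by
        rw [← arg_polar' hq1' ⟨by linarith [hq2.1], by linarith [hq2.2]⟩,
          ← arg_polar' hp1 ⟨hp2.1, hp2.2.le⟩, hqe]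
      exact ⟨by rw [← hq1e]; exact ⟨hq1', hq1.2⟩, harg ▸ hq2⟩
    · rintro ⟨hp1', hp2'⟩
      exact ⟨p, ⟨⟨hp1'.1.le, hp1'.2⟩, hp2'⟩, rfl⟩
  have charU : ∀ p : ℝ × ℝ, p ∈ polarCoord.target →
      (Complex.polarCoord.symm p ∈ U ↔
        p ∈ Set.Ioo (0:ℝ) 1 ×ˢ Set.Ioo (-(Real.pi*c)) (Real.pi*c)) := by
    rintro p hp
    rw [polarCoord_target] at hp
    obtain ⟨hp1, hp2⟩ := hp
    constructor
    · rintro ⟨q, ⟨hq1, hq2⟩, hqe⟩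
      have habs : |q.1| = |p.1| := by
        rw [← Complex.norm_polarCoord_symm, ← Complex.norm_polarCoord_symm, hqe]
      have hq1e : q.1 = p.1 := by
        rw [abs_of_pos hq1.1, abs_of_pos hp1] at habs; exact habs
      have harg : q.2 = p.2 := by
        rw [← arg_polar' hq1.1 ⟨by linarith [hq2.1], by linarith [hq2.2]⟩,
          ← arg_polar' hp1 ⟨hp2.1, hp2.2.le⟩, hqe]
      exact ⟨hq1e ▸ hq1, harg ▸ hq2⟩
    · rintro ⟨hp1', hp2'⟩
      exact ⟨p, ⟨hp1', hp2'⟩, rfl⟩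
  have hIccVol : (volume (Set.Icc (-(Real.pi*c)) (Real.pi*c))).toReal = 2*(Real.pi*c) := by
    rw [Real.volume_Icc, ENNReal.toReal_ofReal (by linarith)]; ring
  have hIooVol : (volume (Set.Ioo (-(Real.pi*c)) (Real.pi*c))).toReal = 2*(Real.pi*c) := by
    rw [Real.volume_Ioo, ENNReal.toReal_ofReal (by linarith)]; ring
  have hKfin : volume KK ≠ ⊤ := hKcomp.measure_lt_top.ne
  have hKvol : volume KK = ENNReal.ofReal (Real.pi * c) := by
    have := vol_polar' KK hKcomp.measurableSet (Set.Ioc 0 1)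
      (Set.Icc (-(Real.pi*c)) (Real.pi*c)) measurableSet_Ioc Set.Ioc_subset_Ioi_self
      measurableSet_Icc (Set.Icc_subset_Ioo (by linarith) hπc) charK
    rw [integral_id_Ioc', hIccVol] at this
    rw [← ENNReal.ofReal_toReal hKfin, this]
    congr 1; ring
  have hUfin : volume U ≠ ⊤ :=
    ne_top_of_le_ne_top hKfin (measure_mono (hUC.trans hCK))
  have hUvol : volume U = ENNReal.ofReal (Real.pi * c) := by
    have := vol_polar' U hUopen.measurableSet (Set.Ioo 0 1)
      (Set.Ioo (-(Real.pi*c)) (Real.pi*c)) measurableSet_Ioo Set.Ioo_subset_Ioi_self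
      measurableSet_Ioo (Set.Ioo_subset_Ioo (by linarith) hπc.le) charU
    rw [integral_id_Ioo', hIooVol] at this
    rw [← ENNReal.ofReal_toReal hUfin, this]
    congr 1; ring
  have hCvol : volume (sectorC c) = ENNReal.ofReal (Real.pi * c) :=
    le_antisymm (hKvol ▸ measure_mono hCK) (hUvol ▸ measure_mono hUC)
  refine ⟨hCvol, ?_⟩
  have hfr : frontier (sectorC c) ⊆ KK \ U := by
    intro z hz
    exact ⟨closure_minimal hCK hKcomp.isClosed hz.1,
      fun hzU => hz.2 (interior_maximal hUC hUopen hzU)⟩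
  have hKU : volume (KK \ U) = 0 := by
    rw [measure_diff (hUC.trans hCK) hUopen.measurableSet.nullMeasurableSet hUfin,
      hKvol, hUvol, tsub_self]
  exact le_antisymm (hKU ▸ measure_mono hfr) zero_le

end Aux

/-- If `(z_n)` has asymptotic density `π⁻¹`, then `(ξ_n)` is uniformly distributed mod 1. -/
theorem density_implies_unifDist (ξ : ℕ → ℝ)
    (H : HasAsympDensity (zseq ξ) Real.pi⁻¹) :
    UnifDistMod1 ξ := by
  intro a b hab hba1
  by_cases hc1 : b - a < 1
  swap
  · -- trivial case `b - a = 1`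
    have hb : b = a + 1 := by linarith
    have hset : ∀ N : ℕ, {n : ℕ | 1 ≤ n ∧ n ≤ N ∧ ∃ k : ℤ, a ≤ ξ n - k ∧ ξ n - k < b}
        = {n : ℕ | 1 ≤ n ∧ n ≤ N} := by
      intro N; ext n
      simp only [Set.mem_setOf_eq]
      have hP : ∃ k : ℤ, a ≤ ξ n - k ∧ ξ n - k < b := by
        refine ⟨⌊ξ n - a⌋, ?_, ?_⟩
        · have h0 := Int.floor_le (ξ n - a); linarith
        · have h1 := Int.lt_floor_add_one (ξ n - a); linarith
      tauto
    have hcard : ∀ N : ℕ, ({n : ℕ | 1 ≤ n ∧ n ≤ N} : Set ℕ).ncard = N := by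
      intro N
      have : {n : ℕ | 1 ≤ n ∧ n ≤ N} = ↑(Finset.Icc 1 N) := by
        ext n; simp [Finset.mem_Icc]
      rw [this, Set.ncard_coe_finset, Nat.card_Icc]
      omega
    have heq : (fun N : ℕ =>
        (({n : ℕ | 1 ≤ n ∧ n ≤ N ∧ ∃ k : ℤ, a ≤ ξ n - k ∧ ξ n - k < b}.ncard : ℝ)) / N)
        =ᶠ[atTop] fun _ => (1:ℝ) := by
      filter_upwards [eventually_ge_atTop 1] with N hN
      rw [hset N, hcard N]
      have : (N:ℝ) ≠ 0 := by positivity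
      field_simp
    rw [show b - a = 1 by linarith]
    exact Tendsto.congr' heq.symm tendsto_const_nhds
  · -- main case `b - a < 1`
    have hπ := Real.pi_pos
    have hc : 0 < b - a := by linarith
    set s : ℝ := (a+b)/2 with hsdef
    set w : Circle := Circle.exp (2*Real.pi*s) with hwdef
    set B : Set ℂ := (fun z : ℂ => (w : ℂ) * z) '' sectorC (b-a) with hBdef
    obtain ⟨hCvol, hCfr⟩ := sector_facts' hc hc1
    have hCmeas : MeasurableSet (sectorC (b-a)) :=
      (continuous_norm.measurable measurableSet_Ioc).inter
        (Complex.measurable_arg measurableSet_Ico)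
    have hfun : (fun z : ℂ => (w : ℂ) * z) = ⇑(rotation w) :=
      funext fun z => (rotation_apply w z).symm
    have himg : B = ⇑(rotation w) '' sectorC (b-a) := by rw [hBdef, hfun]
    have hvolB : volume B = ENNReal.ofReal (Real.pi * (b-a)) := by
      rw [himg, LinearIsometryEquiv.image_eq_preimage_symm,
        ((rotation w).symm.measurePreserving).measure_preimage hCmeas.nullMeasurableSet,
        hCvol]
    have hfrB : volume (frontier B) = 0 := by
      have h2 : frontier B = ⇑(rotation w) '' frontier (sectorC (b-a)) := by
        rw [himg, ← LinearIsometryEquiv.coe_toHomeomorph, ← Homeomorph.image_frontier,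
          LinearIsometryEquiv.coe_toHomeomorph]
      rw [h2, LinearIsometryEquiv.image_eq_preimage_symm,
        ((rotation w).symm.measurePreserving).measure_preimage
          isClosed_frontier.measurableSet.nullMeasurableSet, hCfr]
    have hBbd : Bornology.IsBounded B := by
      apply (Metric.isBounded_closedBall (x := (0:ℂ)) (r := 1)).subset
      rintro z ⟨u, huC, rfl⟩
      rw [Metric.mem_closedBall, dist_zero_right, norm_mul]
      have h1 : ‖(w:ℂ)‖ = 1 := by
        exact Circle.norm_coe w
      rw [h1, one_mul]
      exact huC.1.2
    -- membership characterization
    have hmem : ∀ R : ℝ, 0 < R → ∀ n : ℕ, 1 ≤ n →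
        (zseq ξ n ∈ (fun z : ℂ => (R:ℂ) * z) '' B ↔
          ((n:ℝ) ≤ R^2 ∧ ∃ k : ℤ, a ≤ ξ n - k ∧ ξ n - k < b)) := by
      intro R hR n hn
      have hR0 : (R:ℂ) ≠ 0 := Complex.ofReal_ne_zero.2 hR.ne'
      have hRw : (R:ℂ) * (w:ℂ) ≠ 0 := mul_ne_zero hR0 (Circle.coe_ne_zero w)
      have hn0 : (0:ℝ) < n := by exact_mod_cast hn
      have hsn : (0:ℝ) < Real.sqrt n := Real.sqrt_pos.2 hn0
      have hdiv : (0:ℝ) < Real.sqrt n / R := div_pos hsn hR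
      set v : ℂ := (↑(Real.sqrt n / R) : ℂ)
        * Complex.exp ((2*Real.pi*(ξ n - s) : ℝ) * Complex.I) with hvdef
      have hz : zseq ξ n = ((R:ℂ) * ↑w) * v := by
        rw [hvdef, zseq, Circle.coe_exp]
        have hexp : Complex.exp (2 * (Real.pi:ℂ) * Complex.I * ((ξ n : ℝ):ℂ))
            = Complex.exp (((2*Real.pi*s : ℝ):ℂ) * Complex.I)
              * Complex.exp (((2*Real.pi*(ξ n - s) : ℝ):ℂ) * Complex.I) := by
          rw [← Complex.exp_add]; congr 1; push_cast; ring
        rw [hexp]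
        push_cast
        field_simp
      have hmemv : zseq ξ n ∈ (fun z : ℂ => (R:ℂ) * z) '' B ↔ v ∈ sectorC (b-a) := by
        constructor
        · rintro ⟨y, ⟨u, huC, rfl⟩, hy⟩
          simp only at hy
          have : ((R:ℂ) * ↑w) * u = ((R:ℂ) * ↑w) * v := by
            rw [← hz, ← hy]; ring
          rwa [mul_left_cancel₀ hRw this] at huC
        · intro hv
          exact ⟨(w:ℂ) * v, ⟨v, hv, rfl⟩, by rw [hz]; ring⟩
      have habsv : ‖v‖ = Real.sqrt n / R := by
        rw [hvdef, norm_mul, Complex.norm_real, Complex.norm_exp_ofReal_mul_I,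
          Real.norm_of_nonneg hdiv.le, mul_one]
      have h1 : ‖v‖ ∈ Set.Ioc 0 1 ↔ (n:ℝ) ≤ R^2 := by
        rw [habsv]
        constructor
        · rintro ⟨_, hle⟩
          have hle' : Real.sqrt n ≤ R := by rwa [div_le_one hR] at hle
          calc (n:ℝ) = (Real.sqrt n)^2 := (Real.sq_sqrt hn0.le).symm
            _ ≤ R^2 := by nlinarith
        · intro hle
          refine ⟨hdiv, (div_le_one hR).2 ?_⟩
          have := Real.sqrt_le_sqrt hle
          rwa [Real.sqrt_sq hR.le] at this
      have h2 : Complex.arg v ∈ Set.Ico (-(Real.pi*(b-a))) (Real.pi*(b-a)) ↔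
          ∃ k : ℤ, a ≤ ξ n - k ∧ ξ n - k < b := by
        rw [hvdef]
        rw [arg_aux' hdiv hc hc1]
        refine exists_congr fun k => ?_
        constructor
        · rintro ⟨u1, u2⟩
          constructor
          · rw [hsdef] at u1; linarith
          · rw [hsdef] at u2; linarith
        · rintro ⟨u1, u2⟩
          constructor
          · rw [hsdef]; linarith
          · rw [hsdef]; linarith
      rw [hmemv]
      show ‖v‖ ∈ Set.Ioc 0 1 ∧ _ ↔ _
      rw [h1, h2]
    -- apply the density hypothesis
    have hH := H B hBbd hfrB
    have hval : Real.pi⁻¹ * (volume B).toReal = b - a := by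
      rw [hvolB, ENNReal.toReal_ofReal (by positivity)]
      field_simp
    rw [hval] at hH
    have hsq : Tendsto (fun N : ℕ => Real.sqrt N) atTop atTop := by
      have h1 : Tendsto Real.sqrt atTop atTop := by
        apply Filter.tendsto_atTop_atTop.2
        intro b'
        refine ⟨(max b' 0)^2, fun x hx => ?_⟩
        have h2 : Real.sqrt ((max b' 0)^2) ≤ Real.sqrt x := Real.sqrt_le_sqrt hx
        rw [Real.sqrt_sq (le_max_right b' 0)] at h2
        exact (le_max_left b' 0).trans h2
      exact h1.comp tendsto_natCast_atTop_atTop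
    have hcomp := hH.comp hsq
    apply hcomp.congr'
    filter_upwards [eventually_ge_atTop 1] with N hN
    have hNpos : (0:ℝ) < Real.sqrt N := Real.sqrt_pos.2 (by exact_mod_cast hN)
    have hsqN : (Real.sqrt N)^2 = (N:ℝ) := Real.sq_sqrt (Nat.cast_nonneg N)
    have hsets : {n : ℕ | 1 ≤ n ∧ zseq ξ n ∈ (fun z : ℂ => ((Real.sqrt N : ℝ) : ℂ) * z) '' B}
        = {n : ℕ | 1 ≤ n ∧ n ≤ N ∧ ∃ k : ℤ, a ≤ ξ n - k ∧ ξ n - k < b} := by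
      ext n
      simp only [Set.mem_setOf_eq]
      constructor
      · rintro ⟨h1, h2⟩
        obtain ⟨hle, hk⟩ := (hmem _ hNpos n h1).1 h2
        rw [hsqN] at hle
        exact ⟨h1, by exact_mod_cast hle, hk⟩
      · rintro ⟨h1, h2, h3⟩
        exact ⟨h1, (hmem _ hNpos n h1).2 ⟨by rw [hsqN]; exact_mod_cast h2, h3⟩⟩
    simp only [Function.comp_apply]
    rw [hsets, hsqN]
end

section
/- Let (ξ_n)_{n≥1} be a sequence of real numbers that is uniformly distributed mod 1, and let z_n = √n · e^{2πi ξ_n} ∈ ℂ. Then for all real numbers a < b with b − a ≤ 1 and all reals 0 ≤ c < d, one has lim_{R→∞} #{n ∈ ℕ : z_n ∈ Z_{a,b,Rc,Rd}}/R² = (b − a)(d² − c²), where Z_{a,b,c,d} = { z ∈ ℂ : (1/2π)·arg z ∈ [a,b) + ℤ and c ≤ |z| < d }. -/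
open Filter Topology MeasureTheory

lemma abs_zseq (ξ : ℕ → ℝ) (n : ℕ) : ‖zseq ξ n‖ = Real.sqrt n := by
  unfold zseq
  have h : (2 * (Real.pi:ℂ) * Complex.I * (ξ n : ℂ)) = ((2*Real.pi*ξ n : ℝ):ℂ) * Complex.I := by
    push_cast; ring
  rw [norm_mul, h, Complex.norm_exp_ofReal_mul_I, mul_one, Complex.norm_real, Real.norm_eq_abs,
    abs_of_nonneg (Real.sqrt_nonneg _)]

lemma arg_zseq (ξ : ℕ → ℝ) (n : ℕ) (hn : 1 ≤ n) :
    ∃ m : ℤ, (zseq ξ n).arg / (2 * Real.pi) = ξ n - m := by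
  have hpi := Real.pi_pos
  have hr : (0:ℝ) < Real.sqrt n := Real.sqrt_pos.2 (by exact_mod_cast hn)
  have h : (2 * (Real.pi:ℂ) * Complex.I * (ξ n : ℂ)) = ((2*Real.pi*ξ n : ℝ):ℂ) * Complex.I := by
    push_cast; ring
  have harg : (zseq ξ n).arg = (Complex.exp (((2*Real.pi*ξ n : ℝ):ℂ) * Complex.I)).arg := by
    unfold zseq; rw [h, Complex.arg_real_mul _ hr]
  rw [harg, Complex.arg_exp_mul_I]
  refine ⟨toIocDiv (mul_pos two_pos Real.pi_pos) (-Real.pi) (2*Real.pi*ξ n), ?_⟩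
  rw [← self_sub_toIocDiv_zsmul]
  field_simp
  ring

lemma aux_tendsto (ξ : ℕ → ℝ) (H : UnifDistMod1 ξ) (a b : ℝ) (hab : a < b) (hba : b - a ≤ 1)
    (e : ℝ) (he : 0 ≤ e) :
    Tendsto (fun R : ℝ =>
      (({n : ℕ | 1 ≤ n ∧ n ≤ ⌈(R*e)^2⌉₊ - 1 ∧ ∃ k : ℤ, a ≤ ξ n - k ∧ ξ n - k < b}.ncard : ℝ)) / R ^ 2)
      atTop (𝓝 ((b - a) * e ^ 2)) := by
  rcases eq_or_lt_of_le he with rfl | he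
  · have : ∀ R : ℝ, ({n : ℕ | 1 ≤ n ∧ n ≤ ⌈(R*0)^2⌉₊ - 1 ∧ ∃ k : ℤ, a ≤ ξ n - k ∧ ξ n - k < b}.ncard : ℝ) / R ^ 2 = 0 := by
      intro R
      have : {n : ℕ | 1 ≤ n ∧ n ≤ ⌈(R*0)^2⌉₊ - 1 ∧ ∃ k : ℤ, a ≤ ξ n - k ∧ ξ n - k < b} = ∅ := by
        ext n; simp only [Set.mem_setOf_eq, Set.mem_empty_iff_false, iff_false]
        rintro ⟨h1, h2, -⟩
        simp at h2
        omega
      rw [this]; simp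
    simp only [this]
    simpa using tendsto_const_nhds
  · set N : ℝ → ℕ := fun R => ⌈(R*e)^2⌉₊ - 1 with hN
    have h0 : Tendsto (fun R : ℝ => (R*e)^2) atTop atTop :=
      (tendsto_pow_atTop (two_ne_zero)).comp (Tendsto.atTop_mul_const he tendsto_id)
    have h1 : Tendsto N atTop atTop :=
      (tendsto_sub_atTop_nat 1).comp (tendsto_nat_ceil_atTop.comp h0)
    have hF : Tendsto (fun R : ℝ =>
        ({n : ℕ | 1 ≤ n ∧ n ≤ N R ∧ ∃ k : ℤ, a ≤ ξ n - k ∧ ξ n - k < b}.ncard : ℝ) / (N R)) atTop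
        (𝓝 (b - a)) := (H a b hab hba).comp h1
    have hev : ∀ᶠ R : ℝ in atTop, 1 ≤ (R*e)^2 := by
      filter_upwards [Filter.eventually_ge_atTop (1/e)] with R hR
      have : 1 ≤ R * e := by rw [div_le_iff₀ he] at hR; linarith
      nlinarith
    have hNR : Tendsto (fun R : ℝ => (N R : ℝ) / R ^ 2) atTop (𝓝 (e ^ 2)) := by
      have hlow : Tendsto (fun R : ℝ => ((R*e)^2 - 1) / R ^ 2) atTop (𝓝 (e ^ 2)) := by
        have : Tendsto (fun R : ℝ => e^2 - 1 / R ^ 2) atTop (𝓝 (e ^ 2 - 0)) :=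
          tendsto_const_nhds.sub (tendsto_const_nhds.div_atTop (tendsto_pow_atTop two_ne_zero))
        rw [sub_zero] at this
        refine this.congr' ?_
        filter_upwards [Filter.eventually_gt_atTop (0:ℝ)] with R hR
        field_simp
      have hhigh : Tendsto (fun R : ℝ => (R*e)^2 / R ^ 2) atTop (𝓝 (e ^ 2)) := by
        refine tendsto_const_nhds.congr' ?_
        filter_upwards [Filter.eventually_gt_atTop (0:ℝ)] with R hR
        field_simp
      refine tendsto_of_tendsto_of_tendsto_of_le_of_le' hlow hhigh ?_ ?_
      · filter_upwards [hev, Filter.eventually_gt_atTop (0:ℝ)] with R h1R hR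
        have hc1 : 1 ≤ ⌈(R*e)^2⌉₊ := Nat.one_le_ceil_iff.2 (by linarith)
        have : ((N R : ℕ) : ℝ) = (⌈(R*e)^2⌉₊ : ℝ) - 1 := by
          rw [hN]; push_cast [Nat.cast_sub hc1]; ring
        rw [this]
        have := Nat.le_ceil ((R*e)^2)
        have hR2 : (0:ℝ) < R ^ 2 := by positivity
        gcongr <;> linarith
      · filter_upwards [hev, Filter.eventually_gt_atTop (0:ℝ)] with R h1R hR
        have hc1 : 1 ≤ ⌈(R*e)^2⌉₊ := Nat.one_le_ceil_iff.2 (by linarith)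
        have hcast : ((N R : ℕ) : ℝ) = (⌈(R*e)^2⌉₊ : ℝ) - 1 := by
          rw [hN]; push_cast [Nat.cast_sub hc1]; ring
        rw [hcast]
        have := (Nat.ceil_lt_add_one (by positivity : (0:ℝ) ≤ (R*e)^2))
        have hR2 : (0:ℝ) < R ^ 2 := by positivity
        gcongr <;> linarith
    have := hF.mul hNR
    refine this.congr' ?_
    filter_upwards [h1.eventually_ge_atTop 1, Filter.eventually_gt_atTop (0:ℝ)] with R hR1 hR
    have hne : ((N R : ℕ) : ℝ) ≠ 0 := by positivity
    field_simp
    simp only [hN, mul_pow]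

/-- For a uniformly distributed sequence, the number of points `z_n` in the dilated
sector `Z_{a,b,Rc,Rd} = {z : arg z / (2π) ∈ [a,b) + ℤ, Rc ≤ |z| < Rd}`, divided by `R²`,
tends to `(b - a)(d² - c²)`. -/
theorem count_in_sector (ξ : ℕ → ℝ) (H : UnifDistMod1 ξ)
    (a b c d : ℝ) (hab : a < b) (hba : b - a ≤ 1) (hc : 0 ≤ c) (hcd : c < d) :
    Tendsto
      (fun R : ℝ =>
        ({n : ℕ | 1 ≤ n ∧
          (∃ k : ℤ, a ≤ (zseq ξ n).arg / (2 * Real.pi) - k ∧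
            (zseq ξ n).arg / (2 * Real.pi) - k < b) ∧
          R * c ≤ ‖zseq ξ n‖ ∧ ‖zseq ξ n‖ < R * d}.ncard : ℝ) / R ^ 2)
      atTop (𝓝 ((b - a) * (d ^ 2 - c ^ 2))) := by
  have hd : 0 < d := lt_of_le_of_lt hc hcd
  have hang : ∀ n, 1 ≤ n →
      ((∃ k : ℤ, a ≤ (zseq ξ n).arg / (2 * Real.pi) - k ∧
          (zseq ξ n).arg / (2 * Real.pi) - k < b) ↔
        (∃ k : ℤ, a ≤ ξ n - k ∧ ξ n - k < b)) := by
    intro n hn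
    obtain ⟨m, hm⟩ := arg_zseq ξ n hn
    rw [hm]
    constructor
    · rintro ⟨k, h1, h2⟩
      exact ⟨m + k, by push_cast; constructor <;> linarith⟩
    · rintro ⟨k, h1, h2⟩
      exact ⟨k - m, by push_cast; constructor <;> linarith⟩
  have key := (aux_tendsto ξ H a b hab hba d hd.le).sub (aux_tendsto ξ H a b hab hba c hc)
  have hlim : (b - a) * d ^ 2 - (b - a) * c ^ 2 = (b - a) * (d ^ 2 - c ^ 2) := by ring
  rw [hlim] at key
  refine key.congr' ?_
  filter_upwards [Filter.eventually_gt_atTop (0:ℝ)] with R hR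
  set Nd : ℕ := ⌈(R*d)^2⌉₊ - 1 with hNd
  set Nc : ℕ := ⌈(R*c)^2⌉₊ - 1 with hNc
  set Td : Set ℕ := {n : ℕ | 1 ≤ n ∧ n ≤ Nd ∧ ∃ k : ℤ, a ≤ ξ n - k ∧ ξ n - k < b} with hTd
  set Tc : Set ℕ := {n : ℕ | 1 ≤ n ∧ n ≤ Nc ∧ ∃ k : ℤ, a ≤ ξ n - k ∧ ξ n - k < b} with hTc
  have hNcd : Nc ≤ Nd := by
    have h1 : R*c ≤ R*d := mul_le_mul_of_nonneg_left hcd.le hR.le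
    have h2 : (R*c)^2 ≤ (R*d)^2 := pow_le_pow_left₀ (by positivity) h1 2
    have h3 := Nat.ceil_le_ceil h2
    omega
  have hsub : Tc ⊆ Td := by
    rintro n ⟨h1, h2, h3⟩
    exact ⟨h1, le_trans h2 hNcd, h3⟩
  have hfin : Td.Finite := (Set.finite_Icc 1 Nd).subset (fun n hn => ⟨hn.1, hn.2.1⟩)
  have hset : {n : ℕ | 1 ≤ n ∧
      (∃ k : ℤ, a ≤ (zseq ξ n).arg / (2 * Real.pi) - k ∧
        (zseq ξ n).arg / (2 * Real.pi) - k < b) ∧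
      R * c ≤ ‖zseq ξ n‖ ∧ ‖zseq ξ n‖ < R * d} = Td \ Tc := by
    ext n
    simp only [Set.mem_setOf_eq, Set.mem_diff, hTd, hTc]
    constructor
    · rintro ⟨h1, h2, h3, h4⟩
      rw [abs_zseq] at h3 h4
      rw [hang n h1] at h2
      have hle : (Nd:ℝ) + 1 = ⌈(R*d)^2⌉₊ ∨ (⌈(R*d)^2⌉₊ = 0 ∧ Nd = 0) := by
        rcases Nat.eq_zero_or_pos ⌈(R*d)^2⌉₊ with h | h
        · right; constructor; exact h; omega
        · left; rw [hNd]; push_cast [Nat.cast_sub h]; ring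
      have hnd : n ≤ Nd := by
        have h4' : (n:ℝ) < (R*d)^2 := (Real.sqrt_lt' (by positivity)).1 h4
        have : n < ⌈(R*d)^2⌉₊ := Nat.lt_ceil.2 h4'
        omega
      have hnc : ¬ (n ≤ Nc) := by
        have h3' : ((R*c)^2 : ℝ) ≤ n := by
          have hRc : 0 ≤ R * c := by positivity
          nlinarith [Real.sq_sqrt (show (0:ℝ) ≤ n by positivity), Real.sqrt_nonneg (n:ℝ)]
        have : ⌈(R*c)^2⌉₊ ≤ n := Nat.ceil_le.2 h3'
        omega
      exact ⟨⟨h1, hnd, h2⟩, fun hmem => hnc hmem.2.1⟩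

    · rintro ⟨⟨h1, h2, h3⟩, hnot⟩
      have hnc : ¬ (n ≤ Nc) := fun hle => hnot ⟨h1, hle, h3⟩
      refine ⟨h1, (hang n h1).2 h3, ?_, ?_⟩
      · rw [abs_zseq]
        have hceil : ⌈(R*c)^2⌉₊ ≤ n := by omega
        have : ((R*c)^2 : ℝ) ≤ n := Nat.ceil_le.1 hceil
        have hRc : 0 ≤ R * c := by positivity
        nlinarith [Real.sq_sqrt (show (0:ℝ) ≤ n by positivity), Real.sqrt_nonneg (n:ℝ),
          Real.sqrt_le_sqrt this]
      · rw [abs_zseq]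
        rw [Real.sqrt_lt' (by positivity)]
        have : n < ⌈(R*d)^2⌉₊ := by omega
        exact_mod_cast Nat.lt_ceil.1 this
    all_goals omega
  rw [hset, Set.ncard_diff hsub (hfin.subset hsub),
    Nat.cast_sub (Set.ncard_le_ncard hsub hfin), sub_div]
end

section
/- Let (ξ_n)_{n≥1} be a sequence of real numbers and let z_n = √n · e^{2πi ξ_n} ∈ ℂ. If the point set {z_n : n ≥ 1} is uniformly discrete (there exists r > 0 with |z_m − z_n| ≥ r for all m ≠ n), then there exists h > 0 such that inf_{R ≥ 1} R·g_R^h > 0. -/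
set_option maxHeartbeats 1000000


open Filter Topology MeasureTheory

/-- The minimal gap mod 1, `g_R^h`, among the fractional parts of the `ξ n` with
`R² ≤ n < (R+h)²`.  The minimal gap of the points sorted in `[0,1)` (including the
wrap-around gap `ζ₁ + 1 - ζ_M`) equals the minimal distance to the nearest integer
`|(ξ m - ξ n) - round (ξ m - ξ n)|` over distinct indices `m ≠ n` in the window,
together with the value `1` (which is the single wrap-around gap when the window
has exactly one element, and a harmless upper value otherwise). -/
noncomputable def minGapMod1 (ξ : ℕ → ℝ) (h R : ℝ) : ℝ :=
  sInf ({1} ∪ {d : ℝ | ∃ m n : ℕ, m ≠ n ∧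
    (R ^ 2 ≤ (m : ℝ) ∧ (m : ℝ) < (R + h) ^ 2) ∧
    (R ^ 2 ≤ (n : ℝ) ∧ (n : ℝ) < (R + h) ^ 2) ∧
    d = |(ξ m - ξ n) - round (ξ m - ξ n)|})


lemma abs_exp_I_sub_one (θ : ℝ) :
    ‖Complex.exp ((θ : ℂ) * Complex.I) - 1‖ ≤ |θ| := by
  have hre : (Complex.exp ((θ : ℂ) * Complex.I) - 1).re = Real.cos θ - 1 := by
    simp [Complex.exp_ofReal_mul_I_re]
  have him : (Complex.exp ((θ : ℂ) * Complex.I) - 1).im = Real.sin θ := by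
    simp [Complex.exp_ofReal_mul_I_im]
  rw [Complex.norm_def, Complex.normSq_apply, hre, him]
  have h2 : (Real.cos θ - 1) * (Real.cos θ - 1) + Real.sin θ * Real.sin θ
      = (2 * Real.sin (θ/2)) ^ 2 := by
    have hs := Real.sin_sq_eq_half_sub (θ/2)
    rw [show 2*(θ/2) = θ by ring] at hs
    have hp := Real.sin_sq_add_cos_sq θ
    nlinarith [hs, hp]
  rw [h2, Real.sqrt_sq_eq_abs]
  calc |2 * Real.sin (θ/2)| = 2 * |Real.sin (θ/2)| := by rw [abs_mul]; norm_num
    _ ≤ 2 * |θ/2| := by linarith [Real.abs_sin_le_abs (x := θ/2)]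
    _ = |θ| := by rw [abs_div]; simp; ring

lemma abs_exp_two_pi_sub (a b : ℝ) :
    ‖Complex.exp (2*Real.pi*Complex.I*(a:ℂ)) - Complex.exp (2*Real.pi*Complex.I*(b:ℂ))‖
      ≤ 2*Real.pi * |(a-b) - round (a-b)| := by
  set k : ℤ := round (a-b) with hk
  set x : ℝ := a - b - k with hx
  have key : Complex.exp (2*Real.pi*Complex.I*(a:ℂ)) - Complex.exp (2*Real.pi*Complex.I*(b:ℂ))
      = Complex.exp (2*Real.pi*Complex.I*(b:ℂ)) *
        (Complex.exp (((2*Real.pi*x : ℝ):ℂ) * Complex.I) - 1) := by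
    rw [mul_sub, mul_one, ← Complex.exp_add]
    congr 1
    have h : (2*(Real.pi:ℂ)*Complex.I*(a:ℂ))
        = (2*(Real.pi:ℂ)*Complex.I*(b:ℂ) + ((2*Real.pi*x:ℝ):ℂ)*Complex.I)
          + (k:ℂ)*(2*(Real.pi:ℂ)*Complex.I) := by
      push_cast [hx]; ring
    rw [h, Complex.exp_add, Complex.exp_int_mul_two_pi_mul_I, mul_one]
  rw [key, norm_mul, Complex.norm_exp]
  have hre : (2*(Real.pi:ℂ)*Complex.I*(b:ℂ)).re = 0 := by simp
  rw [hre, Real.exp_zero, one_mul]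
  calc ‖Complex.exp (((2*Real.pi*x : ℝ):ℂ) * Complex.I) - 1‖
      ≤ |2*Real.pi*x| := abs_exp_I_sub_one _
    _ = 2*Real.pi * |x| := by
        rw [abs_mul, abs_of_nonneg (by positivity : (0:ℝ) ≤ 2*Real.pi)]
    _ = 2*Real.pi * |(a-b) - round (a-b)| := by rw [hx, hk]

lemma pair_bound (ξ : ℕ → ℝ) (r h R : ℝ) (hr : 0 < r) (hh0 : 0 < h) (hhr : h ≤ r/2) (hh1 : h ≤ 1)
    (hR : 1 ≤ R)
    (hd : ∀ m n : ℕ, 1 ≤ m → 1 ≤ n → m ≠ n → r ≤ ‖zseq ξ m - zseq ξ n‖)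
    (m n : ℕ) (hmn : m ≠ n)
    (hm1 : R ^ 2 ≤ (m : ℝ)) (hm2 : (m : ℝ) < (R + h) ^ 2)
    (hn1 : R ^ 2 ≤ (n : ℝ)) (hn2 : (n : ℝ) < (R + h) ^ 2) :
    r / (8 * Real.pi) ≤ R * |(ξ m - ξ n) - round (ξ m - ξ n)| := by
  have hπ := Real.pi_pos
  have hR0 : (0:ℝ) < R := lt_of_lt_of_le one_pos hR
  have hRh : (0:ℝ) < R + h := by nlinarith
  have sm1 : R ≤ Real.sqrt m := (Real.le_sqrt hR0.le (by positivity)).2 hm1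
  have sm2 : Real.sqrt m < R + h := (Real.sqrt_lt' hRh).2 hm2
  have sn1 : R ≤ Real.sqrt n := (Real.le_sqrt hR0.le (by positivity)).2 hn1
  have sn2 : Real.sqrt n < R + h := (Real.sqrt_lt' hRh).2 hn2
  have hm1' : (1:ℕ) ≤ m := by
    have : (1:ℝ) ≤ (m:ℝ) := le_trans (by nlinarith) hm1
    exact_mod_cast this
  have hn1' : (1:ℕ) ≤ n := by
    have : (1:ℝ) ≤ (n:ℝ) := le_trans (by nlinarith) hn1
    exact_mod_cast this
  have hz := hd m n hm1' hn1' hmn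
  set ea := Complex.exp (2*Real.pi*Complex.I*(ξ m : ℂ)) with hea
  set eb := Complex.exp (2*Real.pi*Complex.I*(ξ n : ℂ)) with heb
  have split : zseq ξ m - zseq ξ n
      = ((Real.sqrt m - Real.sqrt n : ℝ) : ℂ) * ea + ((Real.sqrt n : ℝ) : ℂ) * (ea - eb) := by
    simp only [zseq, hea, heb]; push_cast; ring
  have habsea : ‖ea‖ = 1 := by
    rw [hea, Complex.norm_exp]
    simp
  have hub : ‖zseq ξ m - zseq ξ n‖
      ≤ |Real.sqrt m - Real.sqrt n| + Real.sqrt n * ‖ea - eb‖ := by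
    rw [split]
    calc ‖((Real.sqrt m - Real.sqrt n : ℝ) : ℂ) * ea
          + ((Real.sqrt n : ℝ) : ℂ) * (ea - eb)‖
        ≤ ‖((Real.sqrt m - Real.sqrt n : ℝ) : ℂ) * ea‖
          + ‖((Real.sqrt n : ℝ) : ℂ) * (ea - eb)‖ := by
          exact norm_add_le _ _
      _ = |Real.sqrt m - Real.sqrt n| + Real.sqrt n * ‖ea - eb‖ := by
          rw [norm_mul, norm_mul, habsea, mul_one, Complex.norm_real, Complex.norm_real, Real.norm_eq_abs, Real.norm_eq_abs,
            abs_of_nonneg (Real.sqrt_nonneg _)]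
  have hestep : ‖ea - eb‖ ≤ 2*Real.pi * |(ξ m - ξ n) - round (ξ m - ξ n)| :=
    abs_exp_two_pi_sub (ξ m) (ξ n)
  have hsq : |Real.sqrt m - Real.sqrt n| ≤ h := by
    rw [abs_le]; constructor <;> nlinarith
  set d := |(ξ m - ξ n) - round (ξ m - ξ n)| with hdd
  have hd0 : 0 ≤ d := abs_nonneg _
  have h1 : r ≤ h + (R + h) * (2*Real.pi*d) := by
    have h2 : Real.sqrt n * ‖ea - eb‖ ≤ (R + h) * (2*Real.pi*d) := by
      apply mul_le_mul sn2.le hestep (norm_nonneg _) hRh.le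
    nlinarith [hz, hub, hsq]
  -- r/2 ≤ (R+h)*2π d ≤ 2R * 2π d
  have hRh2 : R + h ≤ 2 * R := by nlinarith
  rw [div_le_iff₀ (by positivity : (0:ℝ) < 8 * Real.pi)]
  nlinarith [h1, mul_le_mul_of_nonneg_right hRh2 (mul_nonneg (by positivity : (0:ℝ) ≤ 2*Real.pi) hd0)]

/-- If `(z_n)_{n≥1}` is uniformly discrete, then there is `h > 0` with
`inf_{R ≥ 1} R · g_R^h > 0`. -/
theorem gap_inf_pos_of_uniformly_discrete (ξ : ℕ → ℝ)
    (H : ∃ r : ℝ, 0 < r ∧ ∀ m n : ℕ, 1 ≤ m → 1 ≤ n → m ≠ n →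
      r ≤ ‖zseq ξ m - zseq ξ n‖) :
    ∃ h : ℝ, 0 < h ∧
      0 < sInf {x : ℝ | ∃ R : ℝ, 1 ≤ R ∧ x = R * minGapMod1 ξ h R} := by
  obtain ⟨r, hr, hd⟩ := H
  have hπ := Real.pi_pos
  set h : ℝ := min 1 (r/2) with hhdef
  have hh0 : 0 < h := lt_min one_pos (by positivity)
  have hh1 : h ≤ 1 := min_le_left _ _
  have hhr : h ≤ r/2 := min_le_right _ _
  refine ⟨h, hh0, ?_⟩
  set c : ℝ := min 1 (r/(8*Real.pi)) with hcdef
  have hc : 0 < c := lt_min one_pos (by positivity)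
  have hc1 : c ≤ 1 := min_le_left _ _
  have hc2 : c ≤ r/(8*Real.pi) := min_le_right _ _
  refine lt_of_lt_of_le hc (le_csInf ⟨1 * minGapMod1 ξ h 1, 1, le_refl 1, rfl⟩ ?_)
  rintro x ⟨R, hR, rfl⟩
  have hR0 : 0 < R := lt_of_lt_of_le one_pos hR
  have hT : c / R ≤ minGapMod1 ξ h R := by
    rw [minGapMod1]
    apply le_csInf ⟨(1:ℝ), Set.mem_union_left _ (Set.mem_singleton 1)⟩
    rintro d (hd1 | ⟨m, n, hmn, ⟨hm1, hm2⟩, ⟨hn1, hn2⟩, rfl⟩)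
    · rw [Set.mem_singleton_iff] at hd1
      subst hd1
      rw [div_le_one hR0]; exact hc1.trans hR
    · rw [div_le_iff₀ hR0]
      have := pair_bound ξ r h R hr hh0 hhr hh1 hR hd m n hmn hm1 hm2 hn1 hn2
      calc c ≤ r/(8*Real.pi) := hc2
        _ ≤ R * |(ξ m - ξ n) - round (ξ m - ξ n)| := this
        _ = |(ξ m - ξ n) - round (ξ m - ξ n)| * R := mul_comm _ _
  calc c = R * (c/R) := by field_simp
    _ ≤ R * minGapMod1 ξ h R := mul_le_mul_of_nonneg_left hT hR0.le
end

section
/- Let (ξ_n)_{n≥1} be a sequence of real numbers, z_n = √n · e^{2πi ξ_n} ∈ ℂ, and suppose the set {z_n : n ≥ 1} is uniformly discrete with separation r > 0, i.e., |z_m − z_n| ≥ r for all m ≠ n. Then for h = r/2 one has 2π R g_R^h ≥ min{ r − h, r/(1+h) } for all R ≥ 1. -/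
open Filter Topology MeasureTheory

lemma zseq_eq (ξ : ℕ → ℝ) (n : ℕ) :
    zseq ξ n = ((Real.sqrt n * Real.cos (2*Real.pi*ξ n) : ℝ) : ℂ)
      + ((Real.sqrt n * Real.sin (2*Real.pi*ξ n) : ℝ) : ℂ) * Complex.I := by
  unfold zseq
  rw [show (2 * (Real.pi:ℂ) * Complex.I * (ξ n : ℂ)) = ((2*Real.pi*ξ n : ℝ) : ℂ) * Complex.I
      by push_cast; ring, Complex.exp_mul_I, ← Complex.ofReal_cos, ← Complex.ofReal_sin]
  push_cast
  ring

lemma abs_sq_key (ξ : ℕ → ℝ) (m n : ℕ) :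
    (‖zseq ξ m - zseq ξ n‖)^2
      = (Real.sqrt m - Real.sqrt n)^2
        + 4 * Real.sqrt m * Real.sqrt n * Real.sin (Real.pi * (ξ m - ξ n))^2 := by
  rw [Complex.sq_norm, zseq_eq, zseq_eq]
  have p1 := Real.sin_sq_add_cos_sq (2*Real.pi*ξ m)
  have p2 := Real.sin_sq_add_cos_sq (2*Real.pi*ξ n)
  have hcs := Real.cos_sub (2*Real.pi*ξ m) (2*Real.pi*ξ n)
  have hh : Real.sin (Real.pi*(ξ m - ξ n))^2
      = 1/2 - Real.cos (2*Real.pi*ξ m - 2*Real.pi*ξ n)/2 := by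
    rw [Real.sin_sq_eq_half_sub,
      show 2*(Real.pi*(ξ m - ξ n)) = 2*Real.pi*ξ m - 2*Real.pi*ξ n by ring]
  simp only [Complex.normSq_apply, Complex.sub_re, Complex.sub_im, Complex.add_re,
    Complex.add_im, Complex.mul_re, Complex.mul_im, Complex.ofReal_re, Complex.ofReal_im,
    Complex.I_re, Complex.I_im]
  nlinarith [p1, p2, hcs, hh, Real.sq_sqrt (Nat.cast_nonneg m), Real.sq_sqrt (Nat.cast_nonneg n)]

lemma sin_sq_round_bound (x : ℝ) :
    Real.sin (Real.pi * x)^2 ≤ Real.pi^2 * |x - round x|^2 := by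
  have e1 : Real.sin (Real.pi * x - (round x : ℤ) * Real.pi)
      = (-1)^(round x) * Real.sin (Real.pi * x) := Real.sin_sub_int_mul_pi _ _
  have e2 : Real.sin (Real.pi * x - (round x : ℤ) * Real.pi)^2
      ≤ (Real.pi * x - (round x : ℤ) * Real.pi)^2 := Real.sin_sq_le_sq
  have e3 : ((-1 : ℝ)^(round x))^2 = 1 := by
    rcases Int.even_or_odd (round x) with he | ho
    · rw [he.neg_one_zpow]; norm_num
    · rw [Odd.neg_one_zpow ho]; norm_num
  have e4 : (Real.pi * x - (round x : ℤ) * Real.pi)^2 = Real.pi^2 * |x - round x|^2 := by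
    rw [sq_abs]; ring
  calc Real.sin (Real.pi * x)^2
      = ((-1 : ℝ)^(round x))^2 * Real.sin (Real.pi * x)^2 := by rw [e3]; ring
    _ = Real.sin (Real.pi * x - (round x : ℤ) * Real.pi)^2 := by rw [e1, mul_pow]
    _ ≤ (Real.pi * x - (round x : ℤ) * Real.pi)^2 := e2
    _ = Real.pi^2 * |x - round x|^2 := e4

set_option maxHeartbeats 1000000 in
/-- If `(z_n)_{n≥1}` is uniformly discrete with separation `r > 0`, then for
`h = r/2` one has `2π R g_R^h ≥ min (r - h) (r / (1 + h))` for all `R ≥ 1`. -/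
theorem gap_lower_bound_of_separation (ξ : ℕ → ℝ) (r : ℝ) (hr : 0 < r)
    (H : ∀ m n : ℕ, 1 ≤ m → 1 ≤ n → m ≠ n →
      r ≤ ‖zseq ξ m - zseq ξ n‖) :
    ∀ R : ℝ, 1 ≤ R →
      min (r - r / 2) (r / (1 + r / 2)) ≤ 2 * Real.pi * R * minGapMod1 ξ (r / 2) R := by
  intro R hR
  have hπ3 : (3:ℝ) < Real.pi := Real.pi_gt_three
  have hπ0 : (0:ℝ) < Real.pi := by linarith
  have hR0 : (0:ℝ) < R := by linarith
  have h2πR : (0:ℝ) < 2*Real.pi*R := by positivity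
  -- a crude absolute bound on `r`
  have hsqrt2 : Real.sqrt 2 ≤ 2 := by
    nlinarith [Real.sq_sqrt (show (0:ℝ) ≤ 2 by norm_num), Real.sqrt_nonneg 2]
  have hr3 : r ≤ 3 := by
    have h12 := H 1 2 le_rfl one_le_two (by norm_num)
    have htri : ‖zseq ξ 1 - zseq ξ 2‖
        ≤ ‖zseq ξ 1‖ + ‖zseq ξ 2‖ := by
      exact norm_sub_le (zseq ξ 1) (zseq ξ 2)
    rw [abs_zseq, abs_zseq] at htri
    simp only [Nat.cast_one, Nat.cast_ofNat, Real.sqrt_one] at htri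
    linarith
  set S : Set ℝ := {1} ∪ {d : ℝ | ∃ m n : ℕ, m ≠ n ∧
    (R ^ 2 ≤ (m : ℝ) ∧ (m : ℝ) < (R + r/2) ^ 2) ∧
    (R ^ 2 ≤ (n : ℝ) ∧ (n : ℝ) < (R + r/2) ^ 2) ∧
    d = |(ξ m - ξ n) - round (ξ m - ξ n)|} with hSdef
  have hmem : ∀ b ∈ S, min (r - r / 2) (r / (1 + r / 2)) ≤ 2 * Real.pi * R * b := by
    intro b hb
    rcases hb with hb | hb
    · -- b = 1
      rw [Set.mem_singleton_iff] at hb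
      subst hb
      have h1 : min (r - r / 2) (r / (1 + r / 2)) ≤ r - r/2 := min_le_left _ _
      nlinarith [mul_nonneg (show (0:ℝ) ≤ Real.pi - 3 by linarith)
        (show (0:ℝ) ≤ R - 1 by linarith)]
    · obtain ⟨m, n, hmn, ⟨hm1, hm2⟩, ⟨hn1, hn2⟩, hbeq⟩ := hb
      subst hbeq
      set d := |(ξ m - ξ n) - round (ξ m - ξ n)| with hddef
      have hd0 : (0:ℝ) ≤ d := abs_nonneg _
      have hm1' : 1 ≤ m := by
        have : (1:ℝ) ≤ (m:ℝ) := by nlinarith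
        exact_mod_cast this
      have hn1' : 1 ≤ n := by
        have : (1:ℝ) ≤ (n:ℝ) := by nlinarith
        exact_mod_cast this
      have hrle := H m n hm1' hn1' hmn
      set a := Real.sqrt m with hadef
      set bb := Real.sqrt n with hbbdef
      have ha1 : R ≤ a := (Real.le_sqrt hR0.le (Nat.cast_nonneg m)).mpr hm1
      have ha2 : a < R + r/2 := (Real.sqrt_lt' (by linarith)).mpr hm2
      have hb1 : R ≤ bb := (Real.le_sqrt hR0.le (Nat.cast_nonneg n)).mpr hn1
      have hb2 : bb < R + r/2 := (Real.sqrt_lt' (by linarith)).mpr hn2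
      have hsinb : Real.sin (Real.pi * (ξ m - ξ n))^2 ≤ Real.pi^2 * d^2 := by
        have := sin_sq_round_bound (ξ m - ξ n)
        rw [← hddef] at this
        exact this
      have hsq : r^2 ≤ (a - bb)^2 + 4*a*bb*Real.sin (Real.pi*(ξ m - ξ n))^2 := by
        rw [← abs_sq_key]
        exact pow_le_pow_left₀ hr.le hrle 2
      have habs : |a - bb| ≤ r/2 := abs_le.mpr ⟨by linarith, by linarith⟩
      set t := |a - bb| with htdef
      have ht0 : (0:ℝ) ≤ t := abs_nonneg _
      have ht2 : (a - bb)^2 = t^2 := (sq_abs _).symm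
      have hab : a*bb ≤ (R + r/2)*((R + r/2) - t) := by
        rcases le_total a bb with hab' | hab'
        · rw [htdef, abs_of_nonpos (by linarith)]
          nlinarith [mul_nonneg (show (0:ℝ) ≤ R + r/2 + a by linarith)
            (show (0:ℝ) ≤ R + r/2 - bb by linarith)]
        · rw [htdef, abs_of_nonneg (by linarith)]
          nlinarith [mul_nonneg (show (0:ℝ) ≤ R + r/2 + bb by linarith)
            (show (0:ℝ) ≤ R + r/2 - a by linarith)]
      have hmain : r^2 ≤ t^2 + 4*((R + r/2)*((R + r/2) - t))*(Real.pi^2*d^2) := by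
        have h4ab : (0:ℝ) ≤ 4*a*bb := by nlinarith
        have s1 := mul_le_mul_of_nonneg_left hsinb h4ab
        have s2 := mul_le_mul_of_nonneg_right hab
            (show (0:ℝ) ≤ 4*(Real.pi^2*d^2) by positivity)
        linarith [hsq, ht2, s1, s2]
      by_contra hcon
      push_neg at hcon
      rw [lt_min_iff] at hcon
      obtain ⟨hlt1, hlt2⟩ := hcon
      have hK0 : (0:ℝ) ≤ 2*Real.pi*R*d := by positivity
      have hlt2' : (2*Real.pi*R*d)*(1 + r/2) < r := by
        rw [lt_div_iff₀ (show (0:ℝ) < 1 + r/2 by linarith)] at hlt2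
        exact hlt2
      rcases le_total (4*(R + r/2)*(Real.pi^2*d^2)) (r/2) with hc | hc
      · -- convexity: worst case at `t = h`
        have hstep : r^2 ≤ (r/2)^2 + 4*R*(R + r/2)*(Real.pi^2*d^2) := by
          linarith [hmain, mul_nonneg (show (0:ℝ) ≤ r/2 - t by linarith)
            (show (0:ℝ) ≤ t + r/2 - 4*(R + r/2)*(Real.pi^2*d^2) by linarith)]
        have hKh0 : (0:ℝ) ≤ (2*Real.pi*R*d)*(1 + r/2) := by
          apply mul_nonneg hK0; linarith
        have hp1 : (2*Real.pi*R*d)*((2*Real.pi*R*d)*(1 + r/2))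
            ≤ (r - r/2)*((2*Real.pi*R*d)*(1 + r/2)) :=
          mul_le_mul_of_nonneg_right hlt1.le hKh0
        have hp2 : (r - r/2)*((2*Real.pi*R*d)*(1 + r/2)) < (r - r/2)*r := by
          apply mul_lt_mul_of_pos_left hlt2'
          linarith
        linarith [hstep, hp1, hp2, sq_nonneg r,
          mul_nonneg (mul_nonneg (mul_nonneg
            (show (0:ℝ) ≤ 4*Real.pi^2*d^2 by positivity) hR0.le)
            (show (0:ℝ) ≤ r/2 by linarith)) (show (0:ℝ) ≤ R - 1 by linarith)]
      · -- convexity: worst case at `t = 0`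
        have hstep2 : r^2 ≤ 4*(R + r/2)^2*(Real.pi^2*d^2) := by
          linarith [hmain, mul_nonneg ht0
            (show (0:ℝ) ≤ 4*(R + r/2)*(Real.pi^2*d^2) - t by linarith)]
        have hY0 : (0:ℝ) ≤ 2*Real.pi*(R + r/2)*d := by positivity
        have hrY : r ≤ 2*Real.pi*(R + r/2)*d := by
          nlinarith [hstep2, hY0]
        linarith [hrY, hlt2',
          mul_nonneg (mul_nonneg (mul_nonneg
            (show (0:ℝ) ≤ 2*Real.pi by positivity) hd0)
            (show (0:ℝ) ≤ r/2 by linarith)) (show (0:ℝ) ≤ R - 1 by linarith)]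
  have hne : S.Nonempty := ⟨1, Or.inl rfl⟩
  have hlow : min (r - r / 2) (r / (1 + r / 2)) / (2*Real.pi*R) ≤ sInf S :=
    le_csInf hne (fun b hb => (div_le_iff₀ h2πR).mpr (by rw [mul_comm]; exact hmem b hb))
  have hfin := (div_le_iff₀ h2πR).mp hlow
  calc min (r - r / 2) (r / (1 + r / 2)) ≤ sInf S * (2*Real.pi*R) := hfin
    _ = 2 * Real.pi * R * sInf S := by ring
    _ = 2 * Real.pi * R * minGapMod1 ξ (r / 2) R := rfl
end

section
/- Let (ξ_n)_{n≥1} be a sequence of real numbers and let z_n = √n · e^{2πi ξ_n} ∈ ℂ. If the point set {z_n : n ≥ 1} is relatively dense in ℂ, then there exists h > 0 such that sup_{R ≥ 1} R·g_R^h < ∞. -/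
open Filter Topology MeasureTheory

open Real Complex in
lemma chord_lower_aux {t : ℝ} (ht : |t| ≤ 1/2) :
    4 * |t| ≤ ‖Complex.exp (2 * Real.pi * Complex.I * t) - 1‖ := by
  have h2 : (2 * Real.pi * Complex.I * t) = ((2 * Real.pi * t : ℝ) : ℂ) * Complex.I := by
    push_cast; ring
  rw [h2, Complex.norm_def, Real.le_sqrt (by positivity) (Complex.normSq_nonneg _)]
  have hre : (Complex.exp (((2 * Real.pi * t : ℝ) : ℂ) * Complex.I) - 1).re
      = Real.cos (2 * Real.pi * t) - 1 := by
    simp only [Complex.sub_re, Complex.exp_ofReal_mul_I_re, Complex.one_re]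
  have him : (Complex.exp (((2 * Real.pi * t : ℝ) : ℂ) * Complex.I) - 1).im
      = Real.sin (2 * Real.pi * t) := by
    simp only [Complex.sub_im, Complex.exp_ofReal_mul_I_im, Complex.one_im, sub_zero]
  rw [Complex.normSq_apply, hre, him]
  -- key trigonometric facts
  have hs : 2 * |t| ≤ Real.sin (Real.pi * |t|) := by
    have h := Real.mul_le_sin (x := Real.pi * |t|) (by positivity)
      (by nlinarith [Real.pi_pos, abs_nonneg t])
    have hpi := Real.pi_pos
    calc 2 * |t| = 2 / Real.pi * (Real.pi * |t|) := by field_simp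
    _ ≤ _ := h
  have hsq : Real.sin (Real.pi * |t|) ^ 2 = Real.sin (Real.pi * t) ^ 2 := by
    rcases abs_cases t with ⟨h, _⟩ | ⟨h, _⟩ <;> rw [h] <;>
      simp [mul_neg, Real.sin_neg, neg_sq]
  have hcos : Real.cos (2 * Real.pi * t) = 2 * Real.cos (Real.pi * t) ^ 2 - 1 := by
    rw [show 2 * Real.pi * t = 2 * (Real.pi * t) by ring, Real.cos_two_mul]
  have hpy := Real.sin_sq_add_cos_sq (Real.pi * t)
  have hpy2 := Real.sin_sq_add_cos_sq (2 * Real.pi * t)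
  have h0 : (0:ℝ) ≤ 2 * |t| := by positivity
  nlinarith [_root_.sq_abs t, hs, hsq, hcos, hpy, hpy2, h0]

open Real Complex in
lemma chord_lower (Δ : ℝ) :
    4 * |Δ - round Δ| ≤ ‖Complex.exp (2 * Real.pi * Complex.I * Δ) - 1‖ := by
  set t : ℝ := Δ - round Δ with htdef
  have hexp : Complex.exp (2 * Real.pi * Complex.I * Δ)
      = Complex.exp (2 * Real.pi * Complex.I * t) := by
    have : (2 * Real.pi * Complex.I * (Δ:ℂ))
        = 2 * Real.pi * Complex.I * (t:ℂ) + (round Δ : ℤ) * (2 * Real.pi * Complex.I) := by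
      push_cast [htdef]; ring
    rw [this, Complex.exp_add, Complex.exp_int_mul_two_pi_mul_I, mul_one]
  rw [hexp]
  exact chord_lower_aux (abs_sub_round Δ)

set_option maxHeartbeats 1000000 in
/-- If `(z_n)_{n≥1}` is relatively dense, then there is `h > 0` with
`sup_{R ≥ 1} R · g_R^h < ∞`. -/
theorem gap_sup_finite_of_relatively_dense (ξ : ℕ → ℝ)
    (H : ∃ ρ : ℝ, 0 < ρ ∧ ∀ w : ℂ, ∃ n : ℕ, 1 ≤ n ∧ ‖w - zseq ξ n‖ ≤ ρ) :
    ∃ h : ℝ, 0 < h ∧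
      BddAbove {x : ℝ | ∃ R : ℝ, 1 ≤ R ∧ x = R * minGapMod1 ξ h R} := by
  obtain ⟨ρ, hρ, hdense⟩ := H
  refine ⟨7 * ρ, by positivity, ⟨3 * ρ, ?_⟩⟩
  rintro x ⟨R, hR, rfl⟩
  have hR0 : (0:ℝ) ≤ R := by linarith
  set w₁ : ℂ := ((R + 2 * ρ : ℝ) : ℂ) with hw₁
  set w₂ : ℂ := ((R + 2 * ρ : ℝ) : ℂ) + ((3 * ρ : ℝ) : ℂ) * Complex.I with hw₂
  obtain ⟨n, hn1, hn⟩ := hdense w₁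
  obtain ⟨m, hm1, hm⟩ := hdense w₂
  have habs : ∀ k : ℕ, ‖zseq ξ k‖ = Real.sqrt k := by
    intro k
    unfold zseq
    rw [norm_mul, Complex.norm_exp]
    have : (2 * (Real.pi:ℂ) * Complex.I * (ξ k : ℂ)).re = 0 := by simp
    rw [this, Real.exp_zero, mul_one, Complex.norm_real, Real.norm_eq_abs,
      abs_of_nonneg (Real.sqrt_nonneg _)]
  have hw₁abs : ‖w₁‖ = R + 2 * ρ := by
    rw [hw₁, Complex.norm_real, Real.norm_eq_abs, abs_of_nonneg (by linarith)]
  have hw₂lo : R + 2 * ρ ≤ ‖w₂‖ := by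
    have h1 : |w₂.re| ≤ ‖w₂‖ := Complex.abs_re_le_norm w₂
    have h2 : w₂.re = R + 2 * ρ := by simp [hw₂]
    rw [h2] at h1
    exact le_trans (le_abs_self _) h1
  have hw₂hi : ‖w₂‖ ≤ R + 5 * ρ := by
    calc ‖w₂‖ ≤ ‖w₁‖ + ‖((3 * ρ : ℝ) : ℂ) * Complex.I‖ := by
          rw [hw₂, hw₁]; exact norm_add_le _ _
    _ = R + 5 * ρ := by
        rw [hw₁abs, norm_mul, Complex.norm_I, mul_one, Complex.norm_real, Real.norm_eq_abs,
          abs_of_nonneg (by linarith)]; ring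
  -- radii bounds
  have hnb : |‖w₁‖ - Real.sqrt n| ≤ ρ := by
    rw [← habs n]
    exact le_trans (abs_norm_sub_norm_le _ _) hn
  have hmb : |‖w₂‖ - Real.sqrt m| ≤ ρ := by
    rw [← habs m]
    exact le_trans (abs_norm_sub_norm_le _ _) hm
  rw [hw₁abs] at hnb
  have hn_lo : R + ρ ≤ Real.sqrt n := by
    have := abs_le.mp hnb; linarith [this.2]
  have hn_hi : Real.sqrt n ≤ R + 3 * ρ := by
    have := abs_le.mp hnb; linarith [this.1]
  have hm_lo : R + ρ ≤ Real.sqrt m := by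
    have := abs_le.mp hmb; linarith [this.2]
  have hm_hi : Real.sqrt m ≤ R + 6 * ρ := by
    have := abs_le.mp hmb; linarith [this.1]
  have hnsq : Real.sqrt n ^ 2 = (n : ℝ) := Real.sq_sqrt (Nat.cast_nonneg n)
  have hmsq : Real.sqrt m ^ 2 = (m : ℝ) := Real.sq_sqrt (Nat.cast_nonneg m)
  have hn_range : R ^ 2 ≤ (n : ℝ) ∧ (n : ℝ) < (R + 7 * ρ) ^ 2 := by
    constructor <;> nlinarith
  have hm_range : R ^ 2 ≤ (m : ℝ) ∧ (m : ℝ) < (R + 7 * ρ) ^ 2 := by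
    constructor <;> nlinarith
  -- distinctness
  have hne : n ≠ m := by
    intro hnm
    have h12 : ‖w₁ - w₂‖ ≤ 2 * ρ := by
      calc ‖w₁ - w₂‖
          = ‖(w₁ - zseq ξ n) + (zseq ξ m - w₂)‖ := by rw [hnm]; ring_nf
      _ ≤ ‖w₁ - zseq ξ n‖ + ‖zseq ξ m - w₂‖ :=
          norm_add_le _ _
      _ ≤ ρ + ρ := by
          refine add_le_add hn ?_
          rw [norm_sub_rev]; exact hm
      _ = 2 * ρ := by ring
    have h3 : ‖w₁ - w₂‖ = 3 * ρ := by
      have : w₁ - w₂ = -(((3 * ρ : ℝ) : ℂ) * Complex.I) := by rw [hw₁, hw₂]; ring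
      rw [this, norm_neg, norm_mul, Complex.norm_I, mul_one, Complex.norm_real, Real.norm_eq_abs,
        abs_of_nonneg (by linarith)]
    linarith [h12, h3.symm.le.trans h12]
  -- distance between the two points
  have hzz : ‖zseq ξ n - zseq ξ m‖ ≤ 5 * ρ := by
    calc ‖zseq ξ n - zseq ξ m‖
        = ‖-(w₁ - zseq ξ n) + (w₁ - w₂) + (w₂ - zseq ξ m)‖ := by ring_nf
    _ ≤ ‖-(w₁ - zseq ξ n) + (w₁ - w₂)‖ + ‖w₂ - zseq ξ m‖ :=
        norm_add_le _ _
    _ ≤ (‖-(w₁ - zseq ξ n)‖ + ‖w₁ - w₂‖) + ρ :=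
        add_le_add (norm_add_le _ _) hm
    _ ≤ (ρ + 3 * ρ) + ρ := by
        refine add_le_add (add_le_add ?_ ?_) le_rfl
        · rw [norm_neg]; exact hn
        · have : w₁ - w₂ = -(((3 * ρ : ℝ) : ℂ) * Complex.I) := by rw [hw₁, hw₂]; ring
          rw [this, norm_neg, norm_mul, Complex.norm_I, mul_one, Complex.norm_real, Real.norm_eq_abs,
            abs_of_nonneg (by linarith)]
    _ = 5 * ρ := by ring
  have hsd : |Real.sqrt m - Real.sqrt n| ≤ 5 * ρ := by
    rw [← habs m, ← habs n]
    exact le_trans (abs_norm_sub_norm_le _ _)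
      (by rw [norm_sub_rev]; exact hzz)
  -- chord bound
  set en : ℂ := Complex.exp (2 * Real.pi * Complex.I * (ξ n : ℂ)) with hen
  set em : ℂ := Complex.exp (2 * Real.pi * Complex.I * (ξ m : ℂ)) with hem
  have habs_em : ‖em‖ = 1 := by
    rw [hem, Complex.norm_exp]
    have : (2 * (Real.pi:ℂ) * Complex.I * (ξ m : ℂ)).re = 0 := by simp
    rw [this, Real.exp_zero]
  have hkey : ((Real.sqrt n : ℝ) : ℂ) * (en - em)
      = (zseq ξ n - zseq ξ m) + (((Real.sqrt m - Real.sqrt n : ℝ)) : ℂ) * em := by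
    unfold zseq; rw [← hen, ← hem]; push_cast; ring
  have hchord : Real.sqrt n * ‖en - em‖ ≤ 10 * ρ := by
    have h1 : ‖((Real.sqrt n : ℝ) : ℂ) * (en - em)‖
        = Real.sqrt n * ‖en - em‖ := by
      rw [norm_mul, Complex.norm_real, Real.norm_eq_abs, abs_of_nonneg (Real.sqrt_nonneg _)]
    calc Real.sqrt n * ‖en - em‖
        = ‖(zseq ξ n - zseq ξ m) + (((Real.sqrt m - Real.sqrt n : ℝ)) : ℂ) * em‖ := by
          rw [← h1, hkey]
    _ ≤ ‖zseq ξ n - zseq ξ m‖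
        + ‖(((Real.sqrt m - Real.sqrt n : ℝ)) : ℂ) * em‖ := norm_add_le _ _
    _ ≤ 5 * ρ + 5 * ρ := by
        refine add_le_add hzz ?_
        rw [norm_mul, habs_em, mul_one, Complex.norm_real, Real.norm_eq_abs]
        exact hsd
    _ = 10 * ρ := by ring
  -- angle difference
  set Δ : ℝ := ξ n - ξ m with hΔ
  have hratio : ‖en - em‖ = ‖Complex.exp (2 * Real.pi * Complex.I * (Δ:ℂ)) - 1‖ := by
    have : en - em = em * (Complex.exp (2 * Real.pi * Complex.I * (Δ:ℂ)) - 1) := by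
      rw [mul_sub, mul_one, hen, hem, ← Complex.exp_add]
      congr 1
      push_cast [hΔ]; ring
    rw [this, norm_mul, habs_em, one_mul]
  have hround : 4 * |Δ - round Δ| ≤ ‖en - em‖ := by
    rw [hratio]; exact chord_lower Δ
  -- conclude
  have hgap : minGapMod1 ξ (7 * ρ) R ≤ |Δ - round Δ| := by
    unfold minGapMod1
    apply csInf_le
    · refine ⟨0, ?_⟩
      rintro d (hd | ⟨a, b, _, _, _, rfl⟩)
      · simp only [Set.mem_singleton_iff] at hd; rw [hd]; norm_num
      · exact abs_nonneg _
    · right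
      exact ⟨n, m, hne, hn_range, hm_range, rfl⟩
  have hRn : R ≤ Real.sqrt n := by linarith
  have h4 : 4 * (R * |Δ - round Δ|) ≤ 10 * ρ := by
    have h0 : (0:ℝ) ≤ |Δ - round Δ| := abs_nonneg _
    have := mul_le_mul_of_nonneg_right hRn h0
    nlinarith [mul_le_mul_of_nonneg_left hround (Real.sqrt_nonneg (n:ℝ)), hchord,
      Real.sqrt_nonneg (n:ℝ)]
  have : R * minGapMod1 ξ (7 * ρ) R ≤ R * |Δ - round Δ| :=
    mul_le_mul_of_nonneg_left hgap hR0
  linarith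
end

section
/- Let α > 0 and z_n = √n · e^{2πi α √n} ∈ ℂ for n ≥ 1. Then the point set {z_n : n ≥ 1} is a Delone set in ℂ: it is uniformly discrete and relatively dense. -/
open Filter Topology MeasureTheory

lemma normSq_key (a b x y : ℝ) :
    ‖(a:ℂ) * Complex.exp ((x:ℂ)*Complex.I) - (b:ℂ) * Complex.exp ((y:ℂ)*Complex.I)‖ ^ 2
      = (a - b)^2 + 2*a*b*(1 - Real.cos (x - y)) := by
  rw [Complex.sq_norm]
  simp [Complex.normSq_apply, Complex.exp_ofReal_mul_I_re, Complex.exp_ofReal_mul_I_im,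
    Real.cos_sub]
  linear_combination a^2 * Real.sin_sq_add_cos_sq x + b^2 * Real.sin_sq_add_cos_sq y

lemma exp_lip (x y : ℝ) :
    ‖Complex.exp ((x:ℂ)*Complex.I) - Complex.exp ((y:ℂ)*Complex.I)‖ ≤ |x - y| := by
  have h := normSq_key 1 1 x y
  simp only [Complex.ofReal_one, one_mul, mul_one] at h
  have h2 : ‖Complex.exp ((x:ℂ)*Complex.I) - Complex.exp ((y:ℂ)*Complex.I)‖ ^ 2
      ≤ |x - y| ^ 2 := by
    rw [h, sq_abs]
    nlinarith [Real.one_sub_sq_div_two_le_cos (x := x - y)]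
  nlinarith [norm_nonneg (Complex.exp ((x:ℂ)*Complex.I) - Complex.exp ((y:ℂ)*Complex.I)),
    abs_nonneg (x - y)]

lemma abs_pt (a x : ℝ) (ha : 0 ≤ a) :
    ‖(a:ℂ) * Complex.exp ((x:ℂ)*Complex.I)‖ = a := by
  rw [norm_mul, Complex.norm_exp_ofReal_mul_I, Complex.norm_real, Real.norm_eq_abs, abs_of_nonneg ha, mul_one]

lemma zseq_eq_s8 (α : ℝ) (n : ℕ) :
    zseq (fun k => α * Real.sqrt k) n
      = ((Real.sqrt n : ℝ) : ℂ) * Complex.exp (((2*Real.pi*(α*Real.sqrt n) : ℝ) : ℂ) * Complex.I) := by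
  unfold zseq
  congr 1
  push_cast
  ring_nf

lemma disc (α : ℝ) (hα : 0 < α) (m n : ℕ) (hn : 1 ≤ n) (hlt : n < m) :
    min (1/(2*α)) (8*α^2/(4*α+1)) ≤
      ‖zseq (fun k => α * Real.sqrt k) m - zseq (fun k => α * Real.sqrt k) n‖ := by
  set a := Real.sqrt m with ha_def
  set b := Real.sqrt n with hb_def
  have han : (0:ℝ) ≤ m := by positivity
  have hbn : (0:ℝ) ≤ n := by positivity
  have ha2 : a^2 = m := Real.sq_sqrt han
  have hb2 : b^2 = n := Real.sq_sqrt hbn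
  have hb0 : 0 ≤ b := Real.sqrt_nonneg _
  have hn1 : (1:ℝ) ≤ n := by exact_mod_cast hn
  have hb1 : 1 ≤ b := by nlinarith
  have hba : b < a := by
    apply Real.sqrt_lt_sqrt hbn
    exact_mod_cast hlt
  have hδ : 0 < a - b := sub_pos.mpr hba
  have hmn1 : (1:ℝ) ≤ (m:ℝ) - n := by
    have : (n:ℝ) + 1 ≤ m := by exact_mod_cast hlt
    linarith
  rw [zseq_eq_s8, zseq_eq_s8]
  set D := ‖(a:ℂ) * Complex.exp (((2*Real.pi*(α*a) : ℝ) : ℂ) * Complex.I)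
    - (b:ℂ) * Complex.exp (((2*Real.pi*(α*b) : ℝ) : ℂ) * Complex.I)‖ with hD_def
  have hD0 : 0 ≤ D := norm_nonneg _
  have hkey : D^2 = (a-b)^2 + 2*a*b*(1 - Real.cos (2*Real.pi*(α*a) - 2*Real.pi*(α*b))) :=
    normSq_key a b _ _
  have hD1 : a - b ≤ D := by
    have h := norm_sub_norm_le
      ((a:ℂ) * Complex.exp (((2*Real.pi*(α*a) : ℝ) : ℂ) * Complex.I))
      ((b:ℂ) * Complex.exp (((2*Real.pi*(α*b) : ℝ) : ℂ) * Complex.I))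
    rwa [abs_pt a _ (Real.sqrt_nonneg _), abs_pt b _ (Real.sqrt_nonneg _)] at h
  clear_value D a b
  clear hD_def ha_def hb_def han hbn hn hlt hn1
  rcases le_or_gt (1/(2*α)) (a - b) with hcase | hcase
  · exact le_trans (min_le_left _ _) (le_trans hcase hD1)
  · -- small gap case
    have hπ := Real.pi_pos
    have hx : 2*Real.pi*(α*a) - 2*Real.pi*(α*b) = 2*Real.pi*α*(a-b) := by ring
    rw [lt_div_iff₀ (by positivity)] at hcase
    have hxle : |2*Real.pi*α*(a-b)| ≤ Real.pi := by
      have hxpos : 0 < 2*Real.pi*α*(a-b) := mul_pos (mul_pos (mul_pos two_pos hπ) hα) hδ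
      rw [abs_of_nonneg hxpos.le]
      have := mul_lt_mul_of_pos_left hcase hπ
      nlinarith
    have hcos := Real.cos_le_one_sub_mul_cos_sq hxle
    have hπ2 : (2/Real.pi^2) * (2*Real.pi*α*(a-b))^2 = 8*α^2*(a-b)^2 := by
      field_simp
      ring
    have h1 : 1 ≤ (a-b)*(a+b) := by
      have he : (a-b)*(a+b) = (m:ℝ) - (n:ℝ) := by linear_combination ha2 - hb2
      linarith
    have h2 : 2*α*(a+b) ≤ b*(4*α+1) := by nlinarith
    have hbd : 2*α ≤ b*(a-b)*(4*α+1) := by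
      calc 2*α ≤ 2*α*((a-b)*(a+b)) := by nlinarith [mul_le_mul_of_nonneg_left h1 (by positivity : (0:ℝ) ≤ 2*α)]
        _ = (a-b)*(2*α*(a+b)) := by ring
        _ ≤ (a-b)*(b*(4*α+1)) := mul_le_mul_of_nonneg_left h2 hδ.le
        _ = b*(a-b)*(4*α+1) := by ring
    have h3 : 8*α^2*(a-b)^2 ≤ 1 - Real.cos (2*Real.pi*α*(a-b)) := by linarith [hcos, hπ2.symm.le, hπ2.le]
    have h4 : 2*(a*b)*(8*α^2*(a-b)^2) ≤ 2*(a*b)*(1 - Real.cos (2*Real.pi*α*(a-b))) := by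
      apply mul_le_mul_of_nonneg_left h3
      have ha0 : 0 ≤ a := le_trans hb0 hba.le
      exact mul_nonneg (by norm_num) (mul_nonneg ha0 hb0)
    have habb : (16*α^2*(a-b)^2)*(b*b) ≤ (16*α^2*(a-b)^2)*(a*b) :=
      mul_le_mul_of_nonneg_left
        (mul_le_mul_of_nonneg_right hba.le hb0) (by positivity)
    have hsq : (4*α*(b*(a-b)))^2 ≤ D^2 := by
      rw [hkey, hx]
      linarith [h4, habb, sq_nonneg (a-b)]
    have hD2 : 4*α*(b*(a-b)) ≤ D := by
      have h5 := Real.sqrt_le_sqrt hsq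
      rwa [Real.sqrt_sq (mul_nonneg (by positivity) (mul_nonneg hb0 hδ.le)), Real.sqrt_sq hD0] at h5
    have : 8*α^2/(4*α+1) ≤ D := by
      rw [div_le_iff₀ (by positivity)]
      have h5 := mul_le_mul_of_nonneg_left hbd (le_of_lt (by positivity : (0:ℝ) < 4*α))
      have h6 := mul_le_mul_of_nonneg_right hD2 (by positivity : (0:ℝ) ≤ 4*α+1)
      linarith only [h5, h6]
    exact le_trans (min_le_right _ _) this

lemma dense_lem (α : ℝ) (hα : 0 < α) (w : ℂ) :
    ∃ n : ℕ, 1 ≤ n ∧ ‖w - zseq (fun k => α * Real.sqrt k) n‖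
      ≤ 2 + 1/α + Real.pi * α := by
  have hπ := Real.pi_pos
  obtain ⟨R, hR_def⟩ : ∃ R : ℝ, R = ‖w‖ := ⟨_, rfl⟩
  obtain ⟨φ, hφ_def⟩ : ∃ φ : ℝ, φ = Complex.arg w := ⟨_, rfl⟩
  by_cases hR : R ≤ 1 + 1/α
  · refine ⟨1, le_refl _, ?_⟩
    have h1 : ‖zseq (fun k => α * Real.sqrt k) 1‖ = 1 := by
      rw [zseq_eq_s8, abs_pt _ _ (Real.sqrt_nonneg _)]
      simp
    calc ‖w - zseq (fun k => α * Real.sqrt k) 1‖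
        ≤ ‖w‖ + ‖zseq (fun k => α * Real.sqrt k) 1‖ := by
          simpa [sub_eq_add_neg] using norm_add_le w (-(zseq (fun k => α * Real.sqrt k) 1))
      _ = R + 1 := by rw [h1, hR_def]
      _ ≤ 2 + 1/α + Real.pi * α := by nlinarith
  · push_neg at hR
    obtain ⟨k, hk_def⟩ : ∃ k : ℤ, k = ⌈α*R - φ/(2*Real.pi)⌉ := ⟨_, rfl⟩
    obtain ⟨r, hr_def⟩ : ∃ r : ℝ, r = (φ/(2*Real.pi) + k)/α := ⟨_, rfl⟩
    have hk1 : α*R - φ/(2*Real.pi) ≤ k := hk_def ▸ Int.le_ceil _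
    have hk2 : (k:ℝ) < α*R - φ/(2*Real.pi) + 1 := hk_def ▸ Int.ceil_lt_add_one _
    have hrR : R ≤ r := by
      rw [hr_def, le_div_iff₀ hα]
      linarith
    have hrR2 : r ≤ R + 1/α := by
      rw [hr_def, div_le_iff₀ hα]
      have : (R + 1/α)*α = R*α + 1 := by field_simp
      rw [this]
      linarith
    have hα1 : 0 < 1/α := by positivity
    have hr1 : 1 < r := by linarith
    have hr0 : 0 ≤ r := by linarith
    obtain ⟨n, hn_def⟩ : ∃ n : ℕ, n = ⌊r^2⌋₊ := ⟨_, rfl⟩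
    have hn1 : 1 ≤ n := by
      rw [hn_def]
      apply Nat.le_floor
      push_cast
      nlinarith
    have hnr : (n:ℝ) ≤ r^2 := by
      rw [hn_def]
      exact Nat.floor_le (by positivity)
    have hrn : r^2 < (n:ℝ) + 1 := by
      rw [hn_def]
      exact Nat.lt_floor_add_one (r^2)
    obtain ⟨c, hc_def⟩ : ∃ c : ℝ, c = Real.sqrt n := ⟨_, rfl⟩
    have hc2 : c^2 = n := by rw [hc_def]; exact Real.sq_sqrt (by positivity)
    have hc0 : 0 ≤ c := by rw [hc_def]; exact Real.sqrt_nonneg _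
    have hc1 : 1 ≤ c := by
      have : (1:ℝ) ≤ n := by exact_mod_cast hn1
      nlinarith
    have hcr : c ≤ r := by
      have h := Real.sqrt_le_sqrt hnr
      rwa [← hc_def, Real.sqrt_sq hr0] at h
    have hgap : r - c ≤ 1/(2*c) := by
      have hsq : r^2 ≤ (c + 1/(2*c))^2 := by
        have hcc : (c + 1/(2*c))^2 = c^2 + 1 + 1/(4*c^2) := by
          field_simp
          ring
        rw [hcc, hc2]
        have h0 : (0:ℝ) ≤ 1/(4*(n:ℝ)) := by positivity
        linarith
      have hcpos : 0 ≤ c + 1/(2*c) := by positivity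
      nlinarith
    -- the angle of r matches φ modulo 2π
    have harg : 2*Real.pi*(α*r) = φ + 2*Real.pi*k := by
      have hαr : α*r = φ/(2*Real.pi) + k := by
        rw [hr_def]
        field_simp
      rw [hαr]
      field_simp
    have hE : Complex.exp (((2*Real.pi*(α*r) : ℝ) : ℂ) * Complex.I)
        = Complex.exp ((φ:ℝ) * Complex.I) := by
      rw [harg]
      have h9 : ((φ + 2*Real.pi*(k:ℝ) : ℝ) : ℂ) * Complex.I
          = (φ:ℝ) * Complex.I + (k:ℤ) * (2*(Real.pi:ℝ) * Complex.I) := by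
        push_cast
        ring
      rw [h9, Complex.exp_add, Complex.exp_int_mul_two_pi_mul_I, mul_one]
    have hw : ((R:ℝ):ℂ) * Complex.exp ((φ:ℝ) * Complex.I) = w := by
      rw [hR_def, hφ_def]
      exact Complex.norm_mul_exp_arg_mul_I w
    refine ⟨n, hn1, ?_⟩
    have hsplit : w - zseq (fun k => α * Real.sqrt k) n
        = ((R - r : ℝ):ℂ) * Complex.exp ((φ:ℝ) * Complex.I)
          + ((r - c : ℝ):ℂ) * Complex.exp (((2*Real.pi*(α*r) : ℝ) : ℂ) * Complex.I)
          + (c:ℂ) * (Complex.exp (((2*Real.pi*(α*r) : ℝ) : ℂ) * Complex.I)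
              - Complex.exp (((2*Real.pi*(α*c) : ℝ) : ℂ) * Complex.I)) := by
      rw [zseq_eq_s8, hE, ← hw, ← hc_def]
      push_cast
      ring
    rw [hsplit]
    have tri1 := norm_add_le
      (((R - r : ℝ):ℂ) * Complex.exp ((φ:ℝ) * Complex.I)
        + ((r - c : ℝ):ℂ) * Complex.exp (((2*Real.pi*(α*r) : ℝ) : ℂ) * Complex.I))
      ((c:ℂ) * (Complex.exp (((2*Real.pi*(α*r) : ℝ) : ℂ) * Complex.I)
        - Complex.exp (((2*Real.pi*(α*c) : ℝ) : ℂ) * Complex.I)))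
    have tri2 := norm_add_le
      (((R - r : ℝ):ℂ) * Complex.exp ((φ:ℝ) * Complex.I))
      (((r - c : ℝ):ℂ) * Complex.exp (((2*Real.pi*(α*r) : ℝ) : ℂ) * Complex.I))
    have e1 : ‖((R - r : ℝ):ℂ) * Complex.exp ((φ:ℝ) * Complex.I)‖ = |R - r| := by
      rw [norm_mul, Complex.norm_exp_ofReal_mul_I, Complex.norm_real, Real.norm_eq_abs, mul_one]
    have e2 : ‖((r - c : ℝ):ℂ)
        * Complex.exp (((2*Real.pi*(α*r) : ℝ) : ℂ) * Complex.I)‖ = |r - c| := by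
      rw [norm_mul, Complex.norm_exp_ofReal_mul_I, Complex.norm_real, Real.norm_eq_abs, mul_one]
    have e3 : ‖(c:ℂ) * (Complex.exp (((2*Real.pi*(α*r) : ℝ) : ℂ) * Complex.I)
        - Complex.exp (((2*Real.pi*(α*c) : ℝ) : ℂ) * Complex.I))‖
        ≤ c * |2*Real.pi*(α*r) - 2*Real.pi*(α*c)| := by
      rw [norm_mul, Complex.norm_real, Real.norm_eq_abs, abs_of_nonneg hc0]
      exact mul_le_mul_of_nonneg_left (exp_lip _ _) hc0
    have b1 : |R - r| ≤ 1/α := by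
      rw [abs_of_nonpos (by linarith)]
      linarith
    have b2 : |r - c| ≤ 1/(2*c) := by
      rw [abs_of_nonneg (by linarith)]
      exact hgap
    have b3 : c * |2*Real.pi*(α*r) - 2*Real.pi*(α*c)| ≤ Real.pi * α := by
      have h5 : |2*Real.pi*(α*r) - 2*Real.pi*(α*c)| = 2*Real.pi*α*(r - c) := by
        rw [show 2*Real.pi*(α*r) - 2*Real.pi*(α*c) = 2*Real.pi*α*(r-c) by ring]
        exact abs_of_nonneg (mul_nonneg (mul_nonneg (mul_nonneg (by norm_num) hπ.le) hα.le)
          (sub_nonneg.mpr hcr))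
      rw [h5]
      have h6 : 2*Real.pi*α*(r - c) ≤ 2*Real.pi*α*(1/(2*c)) :=
        mul_le_mul_of_nonneg_left hgap (by positivity)
      have h7 : c * (2*Real.pi*α*(1/(2*c))) = Real.pi * α := by
        field_simp
      calc c * (2*Real.pi*α*(r-c)) ≤ c * (2*Real.pi*α*(1/(2*c))) :=
            mul_le_mul_of_nonneg_left h6 hc0
        _ = Real.pi * α := h7
    have b2' : (1:ℝ)/(2*c) ≤ 1/2 := by
      apply div_le_div_of_nonneg_left (by norm_num) (by norm_num)
      linarith
    have e12 : ‖((R - r : ℝ):ℂ) * Complex.exp ((φ:ℝ) * Complex.I)‖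
        + ‖((r - c : ℝ):ℂ)
          * Complex.exp (((2*Real.pi*(α*r) : ℝ) : ℂ) * Complex.I)‖ = |R - r| + |r - c| := by
      rw [e1, e2]
    refine le_trans tri1 (le_trans (add_le_add (le_trans tri2 e12.le) e3) ?_)
    linarith

/-- For any `α > 0`, the set `{√n · e^{2πiα√n} : n ≥ 1}` is a Delone set:
uniformly discrete and relatively dense. -/
theorem delone_sqrt (α : ℝ) (hα : 0 < α) :
    (∃ r : ℝ, 0 < r ∧ ∀ m n : ℕ, 1 ≤ m → 1 ≤ n → m ≠ n →
      r ≤ ‖zseq (fun k => α * Real.sqrt k) m - zseq (fun k => α * Real.sqrt k) n‖) ∧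
    (∃ ρ : ℝ, 0 < ρ ∧ ∀ w : ℂ, ∃ n : ℕ, 1 ≤ n ∧
      ‖w - zseq (fun k => α * Real.sqrt k) n‖ ≤ ρ) := by
  constructor
  · refine ⟨min (1/(2*α)) (8*α^2/(4*α+1)), lt_min (by positivity) (by positivity), ?_⟩
    intro m n hm hn hne
    rcases lt_or_gt_of_ne hne with h | h
    · rw [norm_sub_rev]
      exact disc α hα n m hm h
    · exact disc α hα m n hn h
  · exact ⟨2 + 1/α + Real.pi * α, by positivity, fun w => dense_lem α hα w⟩
end

section
/- Let α > 0 and ξ_n = α√n. Then for h = 1/(2α) one has inf_{R ≥ 1} R·g_R^h > 0, where g_R^h is the minimal gap mod 1 of the fractional parts of the ξ_n with R² ≤ n < (R+h)². -/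
open Filter Topology MeasureTheory

lemma gap_key (α R : ℝ) (hα : 0 < α) (hR : 1 ≤ R) (m n : ℕ) (hmn : m ≠ n)
    (hm1 : R ^ 2 ≤ (m : ℝ)) (hm2 : (m : ℝ) < (R + 1 / (2 * α)) ^ 2)
    (hn1 : R ^ 2 ≤ (n : ℝ)) (hn2 : (n : ℝ) < (R + 1 / (2 * α)) ^ 2) :
    α ^ 2 / ((2 * α + 1) * R) ≤
      |(α * Real.sqrt m - α * Real.sqrt n) - round (α * Real.sqrt m - α * Real.sqrt n)| := by
  have hR0 : (0 : ℝ) < R := lt_of_lt_of_le one_pos hR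
  have hh : (0 : ℝ) < 1 / (2 * α) := by positivity
  set h : ℝ := 1 / (2 * α) with hhdef
  have hRh : 0 < R + h := by linarith
  have hsmlt : Real.sqrt m < R + h := by
    rw [show ((m : ℝ)) = ((m : ℝ)) from rfl]
    exact (Real.sqrt_lt' hRh).2 (by exact_mod_cast hm2)
  have hsnlt : Real.sqrt n < R + h := (Real.sqrt_lt' hRh).2 hn2
  have hsmge : R ≤ Real.sqrt m := by
    rw [Real.le_sqrt (le_of_lt hR0) (Nat.cast_nonneg m)]; exact hm1
  have hsnge : R ≤ Real.sqrt n := by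
    rw [Real.le_sqrt (le_of_lt hR0) (Nat.cast_nonneg n)]; exact hn1
  set a : ℝ := α * Real.sqrt m - α * Real.sqrt n with ha
  have haeq : a = α * (Real.sqrt m - Real.sqrt n) := by ring
  -- upper bound |a| < 1/2
  have habs : |a| < 1 / 2 := by
    rw [haeq, abs_mul, abs_of_pos hα]
    have h1 : |Real.sqrt m - Real.sqrt n| < h := by
      rw [abs_sub_lt_iff]; constructor <;> linarith
    calc α * |Real.sqrt m - Real.sqrt n| < α * h := by
          exact mul_lt_mul_of_pos_left h1 hα
      _ = 1 / 2 := by rw [hhdef]; field_simp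
  have hround : round a = 0 := by
    rw [round_eq_zero_iff]
    constructor
    · have := abs_lt.1 habs; linarith [this.1]
    · exact lt_of_le_of_lt (le_abs_self a) habs
  rw [hround]
  simp only [Int.cast_zero, sub_zero]
  -- lower bound on |a|
  have hsum_pos : 0 < Real.sqrt m + Real.sqrt n := by linarith
  have hdiff : (Real.sqrt m - Real.sqrt n) * (Real.sqrt m + Real.sqrt n) = (m : ℝ) - n := by
    have h1 : Real.sqrt m * Real.sqrt m = (m : ℝ) := Real.mul_self_sqrt (Nat.cast_nonneg m)
    have h2 : Real.sqrt n * Real.sqrt n = (n : ℝ) := Real.mul_self_sqrt (Nat.cast_nonneg n)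
    ring_nf
    nlinarith [h1, h2]
  have hone : (1 : ℝ) ≤ |(m : ℝ) - n| := by
    have : (m : ℝ) - n ≠ 0 := by
      intro hc
      exact hmn (by exact_mod_cast sub_eq_zero.1 hc)
    have hint : ∃ k : ℤ, ((m : ℝ) - n) = (k : ℝ) := ⟨(m : ℤ) - n, by push_cast; ring⟩
    obtain ⟨k, hk⟩ := hint
    rw [hk] at this ⊢
    exact_mod_cast Int.one_le_abs (by exact_mod_cast fun hc => this (by rw [hc]; simp))
  have hlow : 1 / (Real.sqrt m + Real.sqrt n) ≤ |Real.sqrt m - Real.sqrt n| := by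
    rw [div_le_iff₀ hsum_pos]
    calc (1 : ℝ) ≤ |(m : ℝ) - n| := hone
      _ = |Real.sqrt m - Real.sqrt n| * (Real.sqrt m + Real.sqrt n) := by
          rw [← hdiff, abs_mul, abs_of_pos hsum_pos]
  have hsumlt : Real.sqrt m + Real.sqrt n ≤ 2 * R + 1 / α := by
    have : h + h = 1 / α := by
      rw [hhdef]
      rw [← add_div, eq_div_iff (ne_of_gt hα), div_mul_eq_mul_div,
        div_eq_iff (by positivity : (2:ℝ)*α ≠ 0)]
      ring
    nlinarith
  have h2Rα : 0 < 2 * R + 1 / α := by positivity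
  have h1 : 1 / (2 * R + 1 / α) ≤ |Real.sqrt m - Real.sqrt n| :=
    le_trans (one_div_le_one_div_of_le hsum_pos hsumlt) hlow
  have h2 : α / (2 * R + 1 / α) ≤ |a| := by
    rw [haeq, abs_mul, abs_of_pos hα, div_eq_mul_one_div]
    exact mul_le_mul_of_nonneg_left h1 (le_of_lt hα)
  have h3 : α ^ 2 / ((2 * α + 1) * R) ≤ α / (2 * R + 1 / α) := by
    rw [div_le_div_iff₀ (by positivity) h2Rα]
    have hinv : α * (1 / α) = 1 := by field_simp
    nlinarith
  linarith

/-- For `ξ_n = α√n` and `h = 1/(2α)` one has `inf_{R ≥ 1} R · g_R^h > 0`. -/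
theorem gap_inf_pos_sqrt (α : ℝ) (hα : 0 < α) :
    0 < sInf {x : ℝ | ∃ R : ℝ, 1 ≤ R ∧
      x = R * minGapMod1 (fun n => α * Real.sqrt n) (1 / (2 * α)) R} := by
  set c : ℝ := min 1 (α ^ 2 / (2 * α + 1)) with hc
  have hcpos : 0 < c := lt_min one_pos (by positivity)
  have hne : {x : ℝ | ∃ R : ℝ, 1 ≤ R ∧
      x = R * minGapMod1 (fun n => α * Real.sqrt n) (1 / (2 * α)) R}.Nonempty :=
    ⟨1 * minGapMod1 (fun n => α * Real.sqrt n) (1 / (2 * α)) 1, 1, le_refl 1, rfl⟩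
  refine lt_of_lt_of_le hcpos (le_csInf hne ?_)
  rintro x ⟨R, hR, rfl⟩
  have hR0 : 0 < R := lt_of_lt_of_le one_pos hR
  have hbound : c / R ≤ minGapMod1 (fun n => α * Real.sqrt n) (1 / (2 * α)) R := by
    apply le_csInf ⟨(1 : ℝ), Or.inl rfl⟩
    rintro b (hb | ⟨m, n, hmn, ⟨hm1, hm2⟩, ⟨hn1, hn2⟩, hbeq⟩)
    · rw [Set.mem_singleton_iff] at hb
      subst hb
      rw [div_le_one hR0]
      exact le_trans (min_le_left _ _) hR
    · subst hbeq
      have key := gap_key α R hα hR m n hmn hm1 hm2 hn1 hn2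
      refine le_trans ?_ key
      rw [div_le_div_iff₀ hR0 (by positivity : (0:ℝ) < (2 * α + 1) * R)]
      have h4 : c * (2 * α + 1) ≤ α ^ 2 := by
        have h5 : c ≤ α ^ 2 / (2 * α + 1) := min_le_right _ _
        exact (le_div_iff₀ (by positivity)).1 h5
      nlinarith [h4, hR0.le, hcpos.le]
  calc c = R * (c / R) := by field_simp
    _ ≤ R * minGapMod1 (fun n => α * Real.sqrt n) (1 / (2 * α)) R :=
        mul_le_mul_of_nonneg_left hbound (le_of_lt hR0)
end
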